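/- arXiv:1201.3422 — 7 statements merged into one kernel-verified Lean document; each statement's English description precedes it below -/
import Mathlib

section
/- Let V_1,...,V_n be i.i.d. nonnegative random variables with tail distribution \bar{F} satisfying lim_{y\to\infty} y h(y) = \infty where h is the hazard rate. Then for any p>0 and any \epsilon>0, E[(max_{k=1,...,n} V_k)^p] = o(n^\epsilon) as n \to \infty. -/
open Filter MeasureTheory ProbabilityTheory Set
open scoped ENNReal


lemma tail_bound_aux (Fbar h : ℝ → ℝ)
    (hanti : Antitone Fbar)
    (hFexp : ∀ y ≥ (0:ℝ), Fbar y = Real.exp (-∫ u in (0:ℝ)..y, h u))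
    (hlim : Tendsto (fun y => y * h y) atTop atTop)
    (hY : ∃ Y ≥ (0:ℝ), Fbar Y < 1) (m : ℝ) :
    ∃ y1 ≥ (1:ℝ), ∀ y ≥ y1, Fbar y ≤ y1 ^ m * y ^ (-m) := by
  obtain ⟨Y, hY0, hYlt⟩ := hY
  obtain ⟨y0, hy0⟩ := (hlim.eventually_ge_atTop m).exists_forall_of_atTop
  set y1 : ℝ := max (max Y y0) 1 with hy1def
  have hy1ge1 : (1:ℝ) ≤ y1 := le_max_right _ _
  have hy1pos : (0:ℝ) < y1 := lt_of_lt_of_le one_pos hy1ge1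
  have hy1Y : Y ≤ y1 := le_trans (le_max_left _ _) (le_max_left _ _)
  have hy1y0 : y0 ≤ y1 := le_trans (le_max_right _ _) (le_max_left _ _)
  have hint : ∀ y ≥ Y, IntervalIntegrable h volume 0 y := by
    intro y hy
    by_contra hcon
    have h0 : (∫ u in (0:ℝ)..y, h u) = 0 := intervalIntegral.integral_undef hcon
    have h1 : Fbar y = 1 := by rw [hFexp y (le_trans hY0 hy), h0]; simp
    have h2 : Fbar y < 1 := lt_of_le_of_lt (hanti hy) hYlt
    linarith
  refine ⟨y1, hy1ge1, fun y hy => ?_⟩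
  have hypos : (0:ℝ) < y := lt_of_lt_of_le hy1pos hy
  have I1 : IntervalIntegrable h volume 0 y1 := hint y1 hy1Y
  have Iy : IntervalIntegrable h volume 0 y := hint y (le_trans hy1Y hy)
  have I2 : IntervalIntegrable h volume y1 y :=
    Iy.mono_set (by rw [uIcc_of_le hy, uIcc_of_le (le_trans hy1pos.le hy)]
                    exact Icc_subset_Icc hy1pos.le le_rfl)
  have hsplit : (∫ u in (0:ℝ)..y1, h u) + (∫ u in y1..y, h u) = ∫ u in (0:ℝ)..y, h u :=
    intervalIntegral.integral_add_adjacent_intervals I1 I2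
  have hinv : IntervalIntegrable (fun u : ℝ => m * u⁻¹) volume y1 y := by
    apply ContinuousOn.intervalIntegrable
    apply ContinuousOn.mul continuousOn_const
    apply ContinuousOn.inv₀ continuousOn_id
    intro x hx
    rw [uIcc_of_le hy] at hx
    exact ne_of_gt (lt_of_lt_of_le hy1pos hx.1)
  have hmono : (∫ u in y1..y, m * u⁻¹) ≤ ∫ u in y1..y, h u := by
    apply intervalIntegral.integral_mono_on hy hinv I2
    intro x hx
    have hx1 : y1 ≤ x := hx.1
    have hxpos : (0:ℝ) < x := lt_of_lt_of_le hy1pos hx1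
    have hxh := hy0 x (le_trans hy1y0 hx1)
    rw [mul_comm, ← div_le_iff₀ hxpos] at hxh
    simpa [div_eq_mul_inv] using hxh
  have hval : (∫ u in y1..y, m * u⁻¹) = m * Real.log (y / y1) := by
    rw [intervalIntegral.integral_const_mul, integral_inv_of_pos hy1pos hypos]
  have hF1 : Fbar y1 = Real.exp (-∫ u in (0:ℝ)..y1, h u) := hFexp y1 hy1pos.le
  have hFy : Fbar y = Real.exp (-∫ u in (0:ℝ)..y, h u) := hFexp y (le_trans hy1pos.le hy)
  have hFle1 : Real.exp (-∫ u in (0:ℝ)..y1, h u) ≤ 1 :=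
    hF1 ▸ ((hanti hy1Y).trans hYlt.le)
  calc Fbar y
      = Real.exp (-∫ u in (0:ℝ)..y1, h u) * Real.exp (-∫ u in y1..y, h u) := by
        rw [hFy, ← hsplit, neg_add, Real.exp_add]
    _ ≤ 1 * Real.exp (-(m * Real.log (y / y1))) := by
        apply mul_le_mul hFle1 _ (Real.exp_nonneg _) zero_le_one
        apply Real.exp_le_exp.2
        rw [← hval]
        exact neg_le_neg hmono
    _ = (y / y1) ^ (-m) := by
        rw [one_mul, Real.rpow_def_of_pos (div_pos hypos hy1pos)]
        congr 1; ring
    _ = y1 ^ m * y ^ (-m) := by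
        rw [Real.div_rpow hypos.le hy1pos.le, Real.rpow_neg hy1pos.le]
        field_simp

/-- For i.i.d. nonnegative random variables whose common distribution has hazard rate
`h` with `y·h(y) → ∞`, every moment of the maximum of `n` of them is `o(n^ε)`
for every `ε > 0`. -/
theorem moment_of_max_is_little_o
    {Ω : Type*} [MeasureSpace Ω] [IsProbabilityMeasure (ℙ : Measure Ω)]
    (V : ℕ → Ω → ℝ)
    (hmeas : ∀ k, Measurable (V k))
    (hindep : iIndepFun V ℙ)
    (hident : ∀ k, Measure.map (V k) ℙ = Measure.map (V 0) ℙ)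
    (hnonneg : ∀ k ω, 0 ≤ V k ω)
    (f Fbar h : ℝ → ℝ)
    (hFbar : ∀ x, Fbar x = (ℙ {ω | V 0 ω > x}).toReal)
    (hhaz : ∀ y, h y = f y / Fbar y)
    (hFexp : ∀ y ≥ (0:ℝ), Fbar y = Real.exp (-∫ u in (0:ℝ)..y, h u))
    (hlim : Tendsto (fun y => y * h y) atTop atTop) :
    ∀ p > (0:ℝ), ∀ ε > (0:ℝ),
      Tendsto (fun n : ℕ => (∫ ω, (⨆ k : Fin n, V k ω) ^ p ∂ℙ) / (n : ℝ) ^ ε)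
        atTop (nhds 0) := by
  intro p hp ε hε
  classical
  have hFnn : ∀ x, 0 ≤ Fbar x := fun x => by rw [hFbar]; exact ENNReal.toReal_nonneg
  have hanti : Antitone Fbar := by
    intro a b hab
    rw [hFbar, hFbar]
    exact ENNReal.toReal_mono (measure_ne_top _ _)
      (measure_mono fun ω hω => lt_of_le_of_lt hab hω)
  have hY : ∃ Y ≥ (0:ℝ), Fbar Y < 1 := by
    by_contra hcon
    push_neg at hcon
    have hone : ∀ n : ℕ, (ℙ {ω | V 0 ω > (n:ℝ)}) = 1 := by
      intro n
      have h1 : 1 ≤ Fbar n := hcon n (Nat.cast_nonneg n)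
      have h2 : Fbar n ≤ 1 := by
        rw [hFbar]
        exact ENNReal.toReal_le_of_le_ofReal zero_le_one (by simpa using prob_le_one)
      have h3 : Fbar (n:ℝ) = 1 := le_antisymm h2 h1
      rw [hFbar] at h3
      exact (ENNReal.toReal_eq_one_iff _).1 h3
    have hms : ∀ n : ℕ, MeasurableSet {ω | V 0 ω > (n:ℝ)} :=
      fun n => measurableSet_lt measurable_const (hmeas 0)
    have hcompl : ∀ n : ℕ, ℙ ({ω | V 0 ω > (n:ℝ)}ᶜ) = 0 := by
      intro n
      rw [measure_compl (hms n) (measure_ne_top _ _), hone n, measure_univ, tsub_self]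
    have huniv : (⋃ n : ℕ, {ω | V 0 ω > (n:ℝ)}ᶜ) = univ := by
      ext ω
      simp only [mem_iUnion, mem_compl_iff, mem_setOf_eq, not_lt, mem_univ, iff_true]
      exact exists_nat_ge (V 0 ω)
    have h0 : ℙ (⋃ n : ℕ, {ω | V 0 ω > (n:ℝ)}ᶜ) = 0 := measure_iUnion_null hcompl
    rw [huniv, measure_univ] at h0
    exact one_ne_zero h0
  set δ : ℝ := ε / (2 * p) with hδdef
  have hδpos : 0 < δ := by positivity
  set m : ℝ := p + 4 * p / ε with hmdef
  have hmp : p < m := by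
    have : 0 < 4 * p / ε := by positivity
    rw [hmdef]; linarith
  have hem : p - 1 - m < -1 := by linarith
  obtain ⟨y1, hy1, htail⟩ := tail_bound_aux Fbar h hanti hFexp hlim hY m
  have hy1pos : (0:ℝ) < y1 := lt_of_lt_of_le one_pos hy1
  -- the key moment bound
  have key : ∀ n : ℕ, 1 ≤ n → ∀ y : ℝ, y1 ≤ y →
      (∫ ω, (⨆ k : Fin n, V k ω) ^ p ∂ℙ) ≤
        y ^ p + (n : ℝ) * (p * y1 ^ m) * y ^ (p - m) / (m - p) := by
    intro n hn y hyy1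
    haveI : Nonempty (Fin n) := Fin.pos_iff_nonempty.1 hn
    have hypos : (0:ℝ) < y := lt_of_lt_of_le hy1pos hyy1
    set M : Ω → ℝ := fun ω => ⨆ k : Fin n, V k ω with hMdef
    have hMmeas : Measurable M := Measurable.iSup fun k => hmeas k
    have hMnn : ∀ ω, 0 ≤ M ω := fun ω =>
      le_ciSup_of_le (Set.Finite.bddAbove (Set.finite_range _)) ⟨0, hn⟩ (hnonneg _ ω)
    have hMp_nn : 0 ≤ᵐ[ℙ] fun ω => M ω ^ p := ae_of_all _ fun ω => Real.rpow_nonneg (hMnn ω) p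
    have hBoch : ∫ ω, M ω ^ p ∂ℙ = (∫⁻ ω, ENNReal.ofReal (M ω ^ p) ∂ℙ).toReal :=
      integral_eq_lintegral_of_nonneg_ae hMp_nn
        ((hMmeas.pow measurable_const).aestronglyMeasurable)
    have hlc := lintegral_rpow_eq_lintegral_meas_lt_mul ℙ (ae_of_all _ hMnn)
      hMmeas.aemeasurable hp
    -- union bound
    have hub : ∀ t : ℝ, ℙ {ω | t < M ω} ≤ (n : ℝ≥0∞) * ENNReal.ofReal (Fbar t) := by
      intro t
      have hsub : {ω | t < M ω} ⊆ ⋃ k : Fin n, {ω | t < V k ω} := by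
        intro ω hω
        have hω' : t < M ω := hω
        obtain ⟨k, hk⟩ := (lt_ciSup_iff (Set.Finite.bddAbove
          (Set.finite_range (fun k : Fin n => V k ω)))).1 hω'
        exact Set.mem_iUnion.2 ⟨k, hk⟩
      calc ℙ {ω | t < M ω} ≤ ∑ k : Fin n, ℙ {ω | t < V k ω} :=
            le_trans (measure_mono hsub) (measure_iUnion_fintype_le _ _)
        _ = ∑ _k : Fin n, ENNReal.ofReal (Fbar t) := by
            apply Finset.sum_congr rfl
            intro k _
            have h1 : ℙ {ω | t < V k ω} = Measure.map (V k) ℙ (Ioi t) := by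
              rw [Measure.map_apply (hmeas k) measurableSet_Ioi]; rfl
            rw [h1, hident k, Measure.map_apply (hmeas 0) measurableSet_Ioi, hFbar t,
              ENNReal.ofReal_toReal (measure_ne_top _ _)]
            rfl
        _ = (n : ℝ≥0∞) * ENNReal.ofReal (Fbar t) := by
            simp [Finset.sum_const, Finset.card_univ]
    -- split the t-integral at y
    have hsplit : (∫⁻ t in Ioi (0:ℝ), ℙ {ω | t < M ω} * ENNReal.ofReal (t ^ (p - 1))) =
        (∫⁻ t in Ioc (0:ℝ) y, ℙ {ω | t < M ω} * ENNReal.ofReal (t ^ (p - 1)))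
          + ∫⁻ t in Ioi y, ℙ {ω | t < M ω} * ENNReal.ofReal (t ^ (p - 1)) := by
      rw [← Ioc_union_Ioi_eq_Ioi hypos.le,
        lintegral_union measurableSet_Ioi (Ioc_disjoint_Ioi le_rfl)]
    -- part 1
    have h1 : (∫⁻ t in Ioc (0:ℝ) y, ℙ {ω | t < M ω} * ENNReal.ofReal (t ^ (p - 1)))
        ≤ ENNReal.ofReal (y ^ p / p) := by
      have step1 : (∫⁻ t in Ioc (0:ℝ) y, ℙ {ω | t < M ω} * ENNReal.ofReal (t ^ (p - 1)))
          ≤ ∫⁻ t in Ioc (0:ℝ) y, ENNReal.ofReal (t ^ (p - 1)) := by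
        apply lintegral_mono
        intro t
        calc ℙ {ω | t < M ω} * ENNReal.ofReal (t ^ (p - 1))
            ≤ 1 * ENNReal.ofReal (t ^ (p - 1)) := mul_le_mul_left prob_le_one _
          _ = ENNReal.ofReal (t ^ (p - 1)) := one_mul _
      refine step1.trans (le_of_eq ?_)
      have hInt : IntegrableOn (fun t : ℝ => t ^ (p - 1)) (Ioc 0 y) := by
        rw [← intervalIntegrable_iff_integrableOn_Ioc_of_le hypos.le]
        exact intervalIntegral.intervalIntegrable_rpow' (by linarith)
      rw [← ofReal_integral_eq_lintegral_ofReal hInt]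
      · congr 1
        rw [← intervalIntegral.integral_of_le hypos.le, integral_rpow (Or.inl (by linarith))]
        rw [show p - 1 + 1 = p from by ring, Real.zero_rpow hp.ne']
        ring
      · filter_upwards [ae_restrict_mem measurableSet_Ioc] with t ht
        exact Real.rpow_nonneg ht.1.le _
    -- part 2
    have h2 : (∫⁻ t in Ioi y, ℙ {ω | t < M ω} * ENNReal.ofReal (t ^ (p - 1)))
        ≤ ENNReal.ofReal ((n : ℝ) * y1 ^ m * y ^ (p - m) / (m - p)) := by
      have step1 : (∫⁻ t in Ioi y, ℙ {ω | t < M ω} * ENNReal.ofReal (t ^ (p - 1)))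
          ≤ ∫⁻ t in Ioi y, ENNReal.ofReal ((n : ℝ) * y1 ^ m * t ^ (p - 1 - m)) := by
        apply lintegral_mono_ae
        filter_upwards [ae_restrict_mem measurableSet_Ioi] with t ht
        have hty : y < t := ht
        have htpos : (0:ℝ) < t := lt_trans hypos hty
        have hFt : Fbar t ≤ y1 ^ m * t ^ (-m) := htail t (le_of_lt (lt_of_le_of_lt hyy1 hty))
        calc ℙ {ω | t < M ω} * ENNReal.ofReal (t ^ (p - 1))
            ≤ ((n : ℝ≥0∞) * ENNReal.ofReal (Fbar t)) * ENNReal.ofReal (t ^ (p - 1)) :=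
              mul_le_mul_left (hub t) _
          _ = ENNReal.ofReal ((n : ℝ) * Fbar t * t ^ (p - 1)) := by
              rw [← ENNReal.ofReal_natCast n, ← ENNReal.ofReal_mul (Nat.cast_nonneg n),
                ← ENNReal.ofReal_mul (mul_nonneg (Nat.cast_nonneg n) (hFnn t))]
          _ ≤ ENNReal.ofReal ((n : ℝ) * y1 ^ m * t ^ (p - 1 - m)) := by
              apply ENNReal.ofReal_le_ofReal
              have e1 : y1 ^ m * t ^ (-m) * t ^ (p - 1) = y1 ^ m * t ^ (p - 1 - m) := by
                rw [mul_assoc, ← Real.rpow_add htpos]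
                ring_nf
              calc (n : ℝ) * Fbar t * t ^ (p - 1)
                  ≤ (n : ℝ) * (y1 ^ m * t ^ (-m)) * t ^ (p - 1) := by
                    apply mul_le_mul_of_nonneg_right _ (Real.rpow_nonneg htpos.le _)
                    exact mul_le_mul_of_nonneg_left hFt (Nat.cast_nonneg n)
                _ = (n : ℝ) * y1 ^ m * t ^ (p - 1 - m) := by
                    rw [mul_assoc ((n:ℝ)) _ _, e1, mul_assoc]
      refine step1.trans (le_of_eq ?_)
      have hInt : IntegrableOn (fun t : ℝ => (n : ℝ) * y1 ^ m * t ^ (p - 1 - m)) (Ioi y) :=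
        (integrableOn_Ioi_rpow_of_lt hem hypos).const_mul _
      rw [← ofReal_integral_eq_lintegral_ofReal hInt]
      · congr 1
        rw [MeasureTheory.integral_const_mul, integral_Ioi_rpow_of_lt hem hypos]
        rw [show p - 1 - m + 1 = p - m from by ring]
        have hne : m - p ≠ 0 := ne_of_gt (by linarith)
        have hne2 : p - m ≠ 0 := by intro hc; apply hne; linarith
        field_simp
        ring
      · filter_upwards [ae_restrict_mem measurableSet_Ioi] with t ht
        have htpos : (0:ℝ) < t := lt_trans hypos ht
        positivity
    -- combine
    have hA : 0 ≤ (n : ℝ) * y1 ^ m * y ^ (p - m) / (m - p) := by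
      have : (0:ℝ) < m - p := by linarith
      positivity
    have hcomb : (∫⁻ ω, ENNReal.ofReal (M ω ^ p) ∂ℙ)
        ≤ ENNReal.ofReal (y ^ p + (n : ℝ) * (p * y1 ^ m) * y ^ (p - m) / (m - p)) := by
      rw [hlc, hsplit, mul_add]
      calc ENNReal.ofReal p * (∫⁻ t in Ioc (0:ℝ) y, ℙ {ω | t < M ω} * ENNReal.ofReal (t ^ (p - 1)))
            + ENNReal.ofReal p * (∫⁻ t in Ioi y, ℙ {ω | t < M ω} * ENNReal.ofReal (t ^ (p - 1)))
          ≤ ENNReal.ofReal p * ENNReal.ofReal (y ^ p / p)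
            + ENNReal.ofReal p * ENNReal.ofReal ((n : ℝ) * y1 ^ m * y ^ (p - m) / (m - p)) :=
            add_le_add (mul_le_mul_right h1 _) (mul_le_mul_right h2 _)
        _ = ENNReal.ofReal (y ^ p + (n : ℝ) * (p * y1 ^ m) * y ^ (p - m) / (m - p)) := by
            rw [← ENNReal.ofReal_mul hp.le, ← ENNReal.ofReal_mul hp.le,
              ← ENNReal.ofReal_add (by positivity) (by
                have h3 : 0 ≤ (n : ℝ) * y1 ^ m * y ^ (p - m) / (m - p) := hA
                positivity)]
            congr 1
            have hne : m - p ≠ 0 := ne_of_gt (by linarith)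
            field_simp
    rw [hBoch]
    calc (∫⁻ ω, ENNReal.ofReal (M ω ^ p) ∂ℙ).toReal
        ≤ (ENNReal.ofReal (y ^ p + (n : ℝ) * (p * y1 ^ m) * y ^ (p - m) / (m - p))).toReal :=
          ENNReal.toReal_mono ENNReal.ofReal_ne_top hcomb
      _ = y ^ p + (n : ℝ) * (p * y1 ^ m) * y ^ (p - m) / (m - p) := by
          rw [ENNReal.toReal_ofReal]
          have h4 : 0 ≤ (n : ℝ) * (p * y1 ^ m) * y ^ (p - m) / (m - p) := by
            have : (0:ℝ) < m - p := by linarith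
            positivity
          have h5 : 0 ≤ y ^ p := Real.rpow_nonneg hypos.le p
          linarith
  -- final limit computation
  set c : ℝ := p * y1 ^ m / (m - p) with hcdef
  have hgtend : Tendsto (fun nr : ℕ => (nr : ℝ) ^ (δ * p - ε)
      + c * (nr : ℝ) ^ (1 + δ * (p - m) - ε)) atTop (nhds 0) := by
    have t1 : Tendsto (fun nr : ℕ => (nr : ℝ) ^ (δ * p - ε)) atTop (nhds 0) := by
      have he : δ * p - ε = -(ε - δ * p) := by ring
      rw [he]
      apply (tendsto_rpow_neg_atTop _).comp tendsto_natCast_atTop_atTop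
      have : δ * p = ε / 2 := by rw [hδdef]; field_simp
      rw [this]; linarith
    have t2 : Tendsto (fun nr : ℕ => c * (nr : ℝ) ^ (1 + δ * (p - m) - ε)) atTop (nhds 0) := by
      have he : 1 + δ * (p - m) - ε = -(ε + δ * (m - p) - 1) := by ring
      rw [he]
      have hlim2 : Tendsto (fun nr : ℕ => (nr : ℝ) ^ (-(ε + δ * (m - p) - 1))) atTop (nhds 0) := by
        apply (tendsto_rpow_neg_atTop _).comp tendsto_natCast_atTop_atTop
        have : δ * (m - p) = 2 := by
          rw [hδdef, hmdef]
          field_simp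
          ring
        rw [this]; linarith
      simpa using hlim2.const_mul c
    have := t1.add t2
    simpa using this
  apply squeeze_zero' _ _ hgtend
  · -- eventual nonnegativity
    apply Eventually.of_forall
    intro n
    apply div_nonneg _ (Real.rpow_nonneg (Nat.cast_nonneg n) ε)
    apply integral_nonneg
    intro ω
    apply Real.rpow_nonneg
    rcases Nat.eq_zero_or_pos n with h0 | hpos
    · subst h0
      simp [iSup_of_empty', Real.sSup_empty]
    · haveI : Nonempty (Fin n) := Fin.pos_iff_nonempty.1 hpos
      exact le_ciSup_of_le (Set.Finite.bddAbove (Set.finite_range _)) ⟨0, hpos⟩ (hnonneg _ ω)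
  · -- eventual bound
    have hev1 : ∀ᶠ n : ℕ in atTop, y1 ≤ (n : ℝ) ^ δ := by
      have : Tendsto (fun n : ℕ => (n : ℝ) ^ δ) atTop atTop :=
        (tendsto_rpow_atTop hδpos).comp tendsto_natCast_atTop_atTop
      exact this.eventually_ge_atTop y1
    filter_upwards [hev1, eventually_ge_atTop 1] with n hny hn1
    have hnpos : (0:ℝ) < (n : ℝ) := by exact_mod_cast hn1
    have hkey := key n hn1 ((n : ℝ) ^ δ) hny
    have hnε : (0:ℝ) < (n : ℝ) ^ ε := Real.rpow_pos_of_pos hnpos ε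
    rw [div_le_iff₀ hnε]
    calc (∫ ω, (⨆ k : Fin n, V k ω) ^ p ∂ℙ)
        ≤ ((n:ℝ) ^ δ) ^ p + (n : ℝ) * (p * y1 ^ m) * ((n:ℝ) ^ δ) ^ (p - m) / (m - p) := hkey
      _ = ((n : ℝ) ^ (δ * p - ε) + c * (n : ℝ) ^ (1 + δ * (p - m) - ε)) * (n : ℝ) ^ ε := by
          have e1 : ((n:ℝ)^δ)^p = (n:ℝ)^(δ*p) := (Real.rpow_mul hnpos.le δ p).symm
          have e2 : ((n:ℝ)^δ)^(p-m) = (n:ℝ)^(δ*(p-m)) := (Real.rpow_mul hnpos.le δ (p-m)).symm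
          have e3 : (n:ℝ)^(δ*p-ε) * (n:ℝ)^ε = (n:ℝ)^(δ*p) := by
            rw [← Real.rpow_add hnpos]; ring_nf
          have e4 : (n:ℝ)^(1+δ*(p-m)-ε) * (n:ℝ)^ε = (n:ℝ) * (n:ℝ)^(δ*(p-m)) := by
            rw [← Real.rpow_add hnpos, show 1+δ*(p-m)-ε+ε = 1 + δ*(p-m) from by ring,
              Real.rpow_add hnpos, Real.rpow_one]
          rw [e1, e2, add_mul, mul_assoc c, e4, e3, hcdef]
          have hne : m - p ≠ 0 := ne_of_gt (by linarith)
          field_simp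
end

section
/- The function \psi_t(\theta) = \int_0^t \psi_N(\log(e^{\theta}\bar{F}(u) + F(u))) du is twice continuously differentiable in \theta on R, strictly convex, and steep (i.e. \psi_t'(\theta) \to \infty as \theta \to \infty), with derivative \psi_t'(\theta) = \int_0^t \psi_N'(\log(e^{\theta}\bar{F}(u)+F(u))) \cdot e^{\theta}\bar{F}(u)/(e^{\theta}\bar{F}(u)+F(u)) du. -/
open Filter MeasureTheory intervalIntegral Real

section Helpers

lemma spos {θ a : ℝ} (h0 : 0 ≤ a) (h1 : a ≤ 1) : 0 < Real.exp θ * (1 - a) + a := by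
  rcases lt_or_ge a 1 with h | h
  · have := Real.exp_pos θ
    nlinarith
  · have ha : a = 1 := le_antisymm h1 h
    simp [ha]

lemma s_le {θ a : ℝ} (h0 : 0 ≤ a) (h1 : a ≤ 1) :
    Real.exp θ * (1 - a) + a ≤ Real.exp |θ| := by
  have h2 : Real.exp θ ≤ Real.exp |θ| := Real.exp_le_exp.2 (le_abs_self θ)
  have h3 : (1:ℝ) ≤ Real.exp |θ| := Real.one_le_exp (abs_nonneg θ)
  nlinarith

lemma s_ge {θ a : ℝ} (h0 : 0 ≤ a) (h1 : a ≤ 1) :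
    Real.exp (-|θ|) ≤ Real.exp θ * (1 - a) + a := by
  have h2 : Real.exp (-|θ|) ≤ Real.exp θ := Real.exp_le_exp.2 (neg_abs_le θ)
  have h3 : Real.exp (-|θ|) ≤ 1 := Real.exp_le_one_iff.2 (neg_nonpos.2 (abs_nonneg θ))
  nlinarith

lemma logs_abs {θ a : ℝ} (h0 : 0 ≤ a) (h1 : a ≤ 1) :
    |Real.log (Real.exp θ * (1 - a) + a)| ≤ |θ| := by
  have hs : (0:ℝ) < Real.exp θ * (1 - a) + a := spos h0 h1
  rw [abs_le]
  constructor
  · rw [← Real.log_exp (-|θ|)]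
    exact Real.log_le_log (Real.exp_pos _) (s_ge h0 h1)
  · rw [← Real.log_exp |θ|]
    exact Real.log_le_log hs (s_le h0 h1)

lemma r_nonneg {θ a : ℝ} (h0 : 0 ≤ a) (h1 : a ≤ 1) :
    0 ≤ Real.exp θ * (1 - a) / (Real.exp θ * (1 - a) + a) := by
  have hs : (0:ℝ) < Real.exp θ * (1 - a) + a := spos h0 h1
  have : (0:ℝ) ≤ Real.exp θ * (1 - a) := mul_nonneg (Real.exp_pos θ).le (by linarith)
  positivity

lemma r_le_one {θ a : ℝ} (h0 : 0 ≤ a) (h1 : a ≤ 1) :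
    Real.exp θ * (1 - a) / (Real.exp θ * (1 - a) + a) ≤ 1 := by
  rw [div_le_one (spos h0 h1)]
  linarith

lemma q_nonneg {θ a : ℝ} (h0 : 0 ≤ a) (h1 : a ≤ 1) :
    0 ≤ Real.exp θ * (1 - a) * a / (Real.exp θ * (1 - a) + a) ^ 2 := by
  have h2 : (0:ℝ) ≤ Real.exp θ * (1 - a) := mul_nonneg (Real.exp_pos θ).le (by linarith)
  positivity

lemma q_le {θ a : ℝ} (h0 : 0 ≤ a) (h1 : a ≤ 1) :
    Real.exp θ * (1 - a) * a / (Real.exp θ * (1 - a) + a) ^ 2 ≤ Real.exp |θ| := by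
  have hs : (0:ℝ) < Real.exp θ * (1 - a) + a := spos h0 h1
  rw [div_le_iff₀ (by positivity)]
  have h2 : Real.exp θ * (1 - a) ≤ Real.exp θ * (1 - a) + a := by linarith
  have h3 : a ≤ Real.exp |θ| * (Real.exp θ * (1 - a) + a) := by
    have hge : Real.exp (-|θ|) ≤ Real.exp θ * (1 - a) + a := s_ge h0 h1
    have h4 : Real.exp |θ| * Real.exp (-|θ|) = 1 := by
      rw [← Real.exp_add]; simp
    nlinarith [Real.exp_pos |θ|]
  nlinarith [mul_nonneg (Real.exp_pos θ).le (sub_nonneg.2 h1)]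

lemma deriv_nonneg_of_monotone {f : ℝ → ℝ} (hf : Monotone f) (hd : Differentiable ℝ f) (x : ℝ) :
    0 ≤ deriv f x := by
  have h := (hd x).hasDerivAt
  rw [hasDerivAt_iff_tendsto_slope] at h
  have h2 : Tendsto (slope f x) (nhdsWithin x (Set.Ioi x)) (nhds (deriv f x)) :=
    h.mono_left (nhdsWithin_mono x (by intro y hy; exact ne_of_gt hy))
  refine ge_of_tendsto h2 ?_
  filter_upwards [self_mem_nhdsWithin] with y hy
  have : x < y := hy
  rw [slope_def_field]
  exact div_nonneg (by linarith [hf this.le]) (by linarith)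

lemma G1_mono {g : ℝ → ℝ} (hg : StrictMono g) (hgpos : ∀ x, 0 ≤ g x)
    {θ₁ θ₂ a : ℝ} (hθ : θ₁ < θ₂) (h0 : 0 ≤ a) (h1 : a ≤ 1) :
    g (Real.log (Real.exp θ₁ * (1 - a) + a)) *
        (Real.exp θ₁ * (1 - a) / (Real.exp θ₁ * (1 - a) + a)) ≤
      g (Real.log (Real.exp θ₂ * (1 - a) + a)) *
        (Real.exp θ₂ * (1 - a) / (Real.exp θ₂ * (1 - a) + a)) ∧
    (a < 1 →
      g (Real.log (Real.exp θ₁ * (1 - a) + a)) *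
          (Real.exp θ₁ * (1 - a) / (Real.exp θ₁ * (1 - a) + a)) <
        g (Real.log (Real.exp θ₂ * (1 - a) + a)) *
          (Real.exp θ₂ * (1 - a) / (Real.exp θ₂ * (1 - a) + a))) := by
  have hs1 : (0:ℝ) < Real.exp θ₁ * (1 - a) + a := spos h0 h1
  have hs2 : (0:ℝ) < Real.exp θ₂ * (1 - a) + a := spos h0 h1
  rcases eq_or_lt_of_le h1 with h | h
  · subst h
    simp
  · have hb : 0 < 1 - a := by linarith
    have hexp : Real.exp θ₁ < Real.exp θ₂ := Real.exp_lt_exp.2 hθ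
    have hslt : Real.exp θ₁ * (1 - a) + a < Real.exp θ₂ * (1 - a) + a := by nlinarith
    have hL : Real.log (Real.exp θ₁ * (1 - a) + a) < Real.log (Real.exp θ₂ * (1 - a) + a) :=
      Real.log_lt_log hs1 hslt
    have hf : g (Real.log (Real.exp θ₁ * (1 - a) + a)) <
        g (Real.log (Real.exp θ₂ * (1 - a) + a)) := hg hL
    have hf1 : 0 ≤ g (Real.log (Real.exp θ₁ * (1 - a) + a)) := hgpos _
    have hf2 : 0 < g (Real.log (Real.exp θ₂ * (1 - a) + a)) := lt_of_le_of_lt hf1 hf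
    have hr1pos : 0 < Real.exp θ₁ * (1 - a) / (Real.exp θ₁ * (1 - a) + a) :=
      div_pos (mul_pos (Real.exp_pos θ₁) hb) hs1
    have hrle : Real.exp θ₁ * (1 - a) / (Real.exp θ₁ * (1 - a) + a) ≤
        Real.exp θ₂ * (1 - a) / (Real.exp θ₂ * (1 - a) + a) := by
      rw [div_le_div_iff₀ hs1 hs2]
      nlinarith
    have key : g (Real.log (Real.exp θ₁ * (1 - a) + a)) *
        (Real.exp θ₁ * (1 - a) / (Real.exp θ₁ * (1 - a) + a)) <
      g (Real.log (Real.exp θ₂ * (1 - a) + a)) *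
        (Real.exp θ₂ * (1 - a) / (Real.exp θ₂ * (1 - a) + a)) :=
      calc g (Real.log (Real.exp θ₁ * (1 - a) + a)) *
            (Real.exp θ₁ * (1 - a) / (Real.exp θ₁ * (1 - a) + a))
          < g (Real.log (Real.exp θ₂ * (1 - a) + a)) *
            (Real.exp θ₁ * (1 - a) / (Real.exp θ₁ * (1 - a) + a)) :=
            mul_lt_mul_of_pos_right hf hr1pos
        _ ≤ _ := mul_le_mul_of_nonneg_left hrle hf2.le
    exact ⟨key.le, fun _ => key⟩

lemma hasDerivAt_L (θ a : ℝ) (h0 : 0 ≤ a) (h1 : a ≤ 1) :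
    HasDerivAt (fun θ => Real.log (Real.exp θ * (1 - a) + a))
      (Real.exp θ * (1 - a) / (Real.exp θ * (1 - a) + a)) θ := by
  have hs : HasDerivAt (fun θ => Real.exp θ * (1 - a) + a) (Real.exp θ * (1 - a)) θ :=
    ((Real.hasDerivAt_exp θ).mul_const (1 - a)).add_const a
  exact hs.log (spos h0 h1).ne'

lemma hasDerivAt_G {ψ : ℝ → ℝ} (hψ : Differentiable ℝ ψ) (θ a : ℝ) (h0 : 0 ≤ a) (h1 : a ≤ 1) :
    HasDerivAt (fun θ => ψ (Real.log (Real.exp θ * (1 - a) + a)))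
      (deriv ψ (Real.log (Real.exp θ * (1 - a) + a)) *
        (Real.exp θ * (1 - a) / (Real.exp θ * (1 - a) + a))) θ :=
  (hψ _).hasDerivAt.comp θ (hasDerivAt_L θ a h0 h1)

lemma hasDerivAt_r (θ a : ℝ) (h0 : 0 ≤ a) (h1 : a ≤ 1) :
    HasDerivAt (fun θ => Real.exp θ * (1 - a) / (Real.exp θ * (1 - a) + a))
      (Real.exp θ * (1 - a) * a / (Real.exp θ * (1 - a) + a) ^ 2) θ := by
  have hs : HasDerivAt (fun θ => Real.exp θ * (1 - a) + a) (Real.exp θ * (1 - a)) θ :=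
    ((Real.hasDerivAt_exp θ).mul_const (1 - a)).add_const a
  have hn : HasDerivAt (fun θ => Real.exp θ * (1 - a)) (Real.exp θ * (1 - a)) θ :=
    (Real.hasDerivAt_exp θ).mul_const (1 - a)
  have := hn.div hs (spos h0 h1).ne'
  have hsne := (spos (θ := θ) h0 h1).ne'
  exact this.congr_deriv (by ring)

lemma hasDerivAt_G1 {ψ : ℝ → ℝ} (hψ' : Differentiable ℝ (deriv ψ))
    (θ a : ℝ) (h0 : 0 ≤ a) (h1 : a ≤ 1) :
    HasDerivAt (fun θ => deriv ψ (Real.log (Real.exp θ * (1 - a) + a)) *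
        (Real.exp θ * (1 - a) / (Real.exp θ * (1 - a) + a)))
      (deriv (deriv ψ) (Real.log (Real.exp θ * (1 - a) + a)) *
          (Real.exp θ * (1 - a) / (Real.exp θ * (1 - a) + a)) ^ 2 +
        deriv ψ (Real.log (Real.exp θ * (1 - a) + a)) *
          (Real.exp θ * (1 - a) * a / (Real.exp θ * (1 - a) + a) ^ 2)) θ := by
  have h1' : HasDerivAt (fun θ => deriv ψ (Real.log (Real.exp θ * (1 - a) + a)))
      (deriv (deriv ψ) (Real.log (Real.exp θ * (1 - a) + a)) *
        (Real.exp θ * (1 - a) / (Real.exp θ * (1 - a) + a))) θ :=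
    hasDerivAt_G hψ' θ a h0 h1
  have h2' := hasDerivAt_r θ a h0 h1
  have := h1'.mul h2'
  exact this.congr_deriv (by ring)

lemma intInt_of_bound {f : ℝ → ℝ} (t C : ℝ) (hm : Measurable f) (hb : ∀ u, |f u| ≤ C) :
    IntervalIntegrable f MeasureTheory.volume 0 t := by
  rw [intervalIntegrable_iff]
  refine MeasureTheory.Integrable.mono' (g := fun _ => C)
    ((MeasureTheory.integrableOn_const_iff (C := C)).mpr (Or.inr ?_))
    hm.aestronglyMeasurable.restrict (Filter.Eventually.of_forall fun u => ?_)
  · exact measure_Ioc_lt_top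
  · simpa [Real.norm_eq_abs] using hb u

end Helpers

noncomputable def Gfn (ψ F : ℝ → ℝ) (θ u : ℝ) : ℝ :=
  ψ (Real.log (Real.exp θ * (1 - F u) + F u))

noncomputable def G1fn (ψ F : ℝ → ℝ) (θ u : ℝ) : ℝ :=
  deriv ψ (Real.log (Real.exp θ * (1 - F u) + F u)) *
    (Real.exp θ * (1 - F u) / (Real.exp θ * (1 - F u) + F u))

noncomputable def G2fn (ψ F : ℝ → ℝ) (θ u : ℝ) : ℝ :=
  deriv (deriv ψ) (Real.log (Real.exp θ * (1 - F u) + F u)) *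
      (Real.exp θ * (1 - F u) / (Real.exp θ * (1 - F u) + F u)) ^ 2 +
    deriv ψ (Real.log (Real.exp θ * (1 - F u) + F u)) *
      (Real.exp θ * (1 - F u) * F u / (Real.exp θ * (1 - F u) + F u) ^ 2)

section Main

variable {ψ F : ℝ → ℝ} {t : ℝ}

lemma measurable_sfn (hFm : Measurable F) (θ : ℝ) :
    Measurable fun u => Real.exp θ * (1 - F u) + F u :=
  (measurable_const.mul (measurable_const.sub hFm)).add hFm

lemma measurable_Gfn (hψc : Continuous ψ) (hFm : Measurable F) (θ : ℝ) :
    Measurable fun u => Gfn ψ F θ u :=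
  hψc.measurable.comp (Real.measurable_log.comp (measurable_sfn hFm θ))

lemma measurable_G1fn (hψ'c : Continuous (deriv ψ)) (hFm : Measurable F) (θ : ℝ) :
    Measurable fun u => G1fn ψ F θ u :=
  ((hψ'c.measurable.comp (Real.measurable_log.comp (measurable_sfn hFm θ)))).mul
    ((measurable_const.mul (measurable_const.sub hFm)).div (measurable_sfn hFm θ))

lemma measurable_G2fn (hψ'c : Continuous (deriv ψ)) (hψ''c : Continuous (deriv (deriv ψ)))
    (hFm : Measurable F) (θ : ℝ) :
    Measurable fun u => G2fn ψ F θ u := by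
  apply Measurable.add
  · exact ((hψ''c.measurable.comp (Real.measurable_log.comp (measurable_sfn hFm θ)))).mul
      (((measurable_const.mul (measurable_const.sub hFm)).div (measurable_sfn hFm θ)).pow
        measurable_const)
  · exact ((hψ'c.measurable.comp (Real.measurable_log.comp (measurable_sfn hFm θ)))).mul
      (((measurable_const.mul (measurable_const.sub hFm)).mul hFm).div
        ((measurable_sfn hFm θ).pow measurable_const))

lemma abs_theta_le_of_ball {θ θ0 : ℝ} (hθ : θ ∈ Metric.ball θ0 1) : |θ| ≤ |θ0| + 1 := by
  have h : |θ - θ0| < 1 := by rwa [Metric.mem_ball, Real.dist_eq] at hθ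
  have := abs_sub_abs_le_abs_sub θ θ0
  linarith

lemma logs_mem_Icc (hFrange : ∀ u, 0 ≤ F u ∧ F u ≤ 1) {θ M : ℝ} (hθ : |θ| ≤ M) (u : ℝ) :
    Real.log (Real.exp θ * (1 - F u) + F u) ∈ Set.Icc (-M) M := by
  have h := (logs_abs (hFrange u).1 (hFrange u).2 (θ := θ)).trans hθ
  exact abs_le.mp h

lemma G1fn_bound (hFrange : ∀ u, 0 ≤ F u ∧ F u ≤ 1) {M C1 : ℝ}
    (hC1 : ∀ x ∈ Set.Icc (-M) M, ‖deriv ψ x‖ ≤ C1) {θ : ℝ} (hθ : |θ| ≤ M) (u : ℝ) :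
    |G1fn ψ F θ u| ≤ C1 := by
  have hMnn : 0 ≤ M := (abs_nonneg θ).trans hθ
  have hC1nn : 0 ≤ C1 := (norm_nonneg _).trans (hC1 0 ⟨by linarith, hMnn⟩)
  rw [G1fn, abs_mul]
  have hr : |Real.exp θ * (1 - F u) / (Real.exp θ * (1 - F u) + F u)| ≤ 1 := by
    rw [abs_of_nonneg (r_nonneg (hFrange u).1 (hFrange u).2)]
    exact r_le_one (hFrange u).1 (hFrange u).2
  calc |deriv ψ (Real.log (Real.exp θ * (1 - F u) + F u))| *
        |Real.exp θ * (1 - F u) / (Real.exp θ * (1 - F u) + F u)|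
      ≤ C1 * 1 := by
        apply mul_le_mul ?_ hr (abs_nonneg _) hC1nn
        simpa [Real.norm_eq_abs] using hC1 _ (logs_mem_Icc hFrange hθ u)
    _ = C1 := mul_one _

lemma G2fn_bound (hFrange : ∀ u, 0 ≤ F u ∧ F u ≤ 1) {M C1 C2 : ℝ}
    (hC1 : ∀ x ∈ Set.Icc (-M) M, ‖deriv ψ x‖ ≤ C1)
    (hC2 : ∀ x ∈ Set.Icc (-M) M, ‖deriv (deriv ψ) x‖ ≤ C2)
    {θ : ℝ} (hθ : |θ| ≤ M) (u : ℝ) :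
    |G2fn ψ F θ u| ≤ C2 + C1 * Real.exp M := by
  have h0 := (hFrange u).1
  have h1 := (hFrange u).2
  have hMnn : 0 ≤ M := (abs_nonneg θ).trans hθ
  have hC1nn : 0 ≤ C1 := (norm_nonneg _).trans (hC1 0 ⟨by linarith, hMnn⟩)
  have hC2nn : 0 ≤ C2 := (norm_nonneg _).trans (hC2 0 ⟨by linarith, hMnn⟩)
  have hmem := logs_mem_Icc hFrange hθ u
  have hr : |Real.exp θ * (1 - F u) / (Real.exp θ * (1 - F u) + F u)| ≤ 1 := by
    rw [abs_of_nonneg (r_nonneg h0 h1)]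
    exact r_le_one h0 h1
  have hq : |Real.exp θ * (1 - F u) * F u / (Real.exp θ * (1 - F u) + F u) ^ 2| ≤ Real.exp M := by
    rw [abs_of_nonneg (q_nonneg h0 h1)]
    exact (q_le h0 h1).trans (Real.exp_le_exp.2 hθ)
  rw [G2fn]
  refine (abs_add_le _ _).trans ?_
  have e1 : |deriv (deriv ψ) (Real.log (Real.exp θ * (1 - F u) + F u)) *
      (Real.exp θ * (1 - F u) / (Real.exp θ * (1 - F u) + F u)) ^ 2| ≤ C2 := by
    rw [abs_mul, abs_pow]
    calc _ ≤ C2 * 1 := by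
          apply mul_le_mul ?_ ?_ (by positivity) hC2nn
          · simpa [Real.norm_eq_abs] using hC2 _ hmem
          · calc |Real.exp θ * (1 - F u) / (Real.exp θ * (1 - F u) + F u)| ^ 2 ≤ 1 ^ 2 :=
                  pow_le_pow_left₀ (abs_nonneg _) hr 2
              _ = 1 := one_pow 2
      _ = C2 := mul_one _
  have e2 : |deriv ψ (Real.log (Real.exp θ * (1 - F u) + F u)) *
      (Real.exp θ * (1 - F u) * F u / (Real.exp θ * (1 - F u) + F u) ^ 2)| ≤ C1 * Real.exp M := by
    rw [abs_mul]
    apply mul_le_mul ?_ hq (abs_nonneg _) hC1nn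
    simpa [Real.norm_eq_abs] using hC1 _ hmem
  linarith

end Main

section Main2

variable {ψ F : ℝ → ℝ}

lemma keyA (hC2 : ContDiff ℝ 2 ψ) (hFrange : ∀ u, 0 ≤ F u ∧ F u ≤ 1)
    (hFmono : Monotone F) (t θ0 : ℝ) :
    IntervalIntegrable (fun u => G1fn ψ F θ0 u) MeasureTheory.volume 0 t ∧
    HasDerivAt (fun θ => ∫ u in (0:ℝ)..t, Gfn ψ F θ u) (∫ u in (0:ℝ)..t, G1fn ψ F θ0 u) θ0 := by
  have hψdiff : Differentiable ℝ ψ := hC2.differentiable (by norm_num)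
  have hψcont : Continuous ψ := hC2.continuous
  have hψ'cont : Continuous (deriv ψ) := hC2.continuous_deriv (by norm_num)
  have hFm : Measurable F := hFmono.measurable
  set M : ℝ := |θ0| + 1 with hM
  obtain ⟨C0, hC0⟩ := (isCompact_Icc (a := -M) (b := M)).exists_bound_of_continuousOn
    hψcont.continuousOn
  obtain ⟨C1, hC1⟩ := (isCompact_Icc (a := -M) (b := M)).exists_bound_of_continuousOn
    hψ'cont.continuousOn
  have hθ0M : |θ0| ≤ M := by rw [hM]; linarith
  refine intervalIntegral.hasDerivAt_integral_of_dominated_loc_of_deriv_le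
      (bound := fun _ => C1) (Metric.ball_mem_nhds θ0 one_pos)
      (Eventually.of_forall fun θ => (measurable_Gfn hψcont hFm θ).aestronglyMeasurable)
      ?_ (measurable_G1fn hψ'cont hFm θ0).aestronglyMeasurable ?_ intervalIntegrable_const ?_
  · refine intInt_of_bound t C0 (measurable_Gfn hψcont hFm θ0) fun u => ?_
    have := hC0 _ (logs_mem_Icc hFrange hθ0M u)
    simpa [Gfn, Real.norm_eq_abs] using this
  · refine Eventually.of_forall fun u _ θ hθ => ?_
    have hθM : |θ| ≤ M := abs_theta_le_of_ball hθ
    simpa [Real.norm_eq_abs] using G1fn_bound hFrange hC1 hθM u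
  · refine Eventually.of_forall fun u _ θ _ => ?_
    exact hasDerivAt_G hψdiff θ (F u) (hFrange u).1 (hFrange u).2

lemma keyB (hC2 : ContDiff ℝ 2 ψ) (hFrange : ∀ u, 0 ≤ F u ∧ F u ≤ 1)
    (hFmono : Monotone F) (t θ0 : ℝ) :
    HasDerivAt (fun θ => ∫ u in (0:ℝ)..t, G1fn ψ F θ u) (∫ u in (0:ℝ)..t, G2fn ψ F θ0 u) θ0 := by
  have hψ'cont : Continuous (deriv ψ) := hC2.continuous_deriv (by norm_num)
  have hC1d : ContDiff ℝ 1 (deriv ψ) := by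
    have h21 : (2 : WithTop ℕ∞) = 1 + 1 := by norm_num
    exact (contDiff_succ_iff_deriv.mp (h21 ▸ hC2)).2.2
  have hψ'diff : Differentiable ℝ (deriv ψ) := hC1d.differentiable one_ne_zero
  have hψ''cont : Continuous (deriv (deriv ψ)) := hC1d.continuous_deriv le_rfl
  have hFm : Measurable F := hFmono.measurable
  set M : ℝ := |θ0| + 1 with hM
  obtain ⟨C1, hC1⟩ := (isCompact_Icc (a := -M) (b := M)).exists_bound_of_continuousOn
    hψ'cont.continuousOn
  obtain ⟨C2, hC2'⟩ := (isCompact_Icc (a := -M) (b := M)).exists_bound_of_continuousOn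
    hψ''cont.continuousOn
  have hθ0M : |θ0| ≤ M := by rw [hM]; linarith
  refine (intervalIntegral.hasDerivAt_integral_of_dominated_loc_of_deriv_le
      (bound := fun _ => C2 + C1 * Real.exp M) (Metric.ball_mem_nhds θ0 one_pos)
      (Eventually.of_forall fun θ => (measurable_G1fn hψ'cont hFm θ).aestronglyMeasurable)
      ?_ (measurable_G2fn hψ'cont hψ''cont hFm θ0).aestronglyMeasurable ?_
      intervalIntegrable_const ?_).2
  · exact intInt_of_bound t C1 (measurable_G1fn hψ'cont hFm θ0)
      fun u => G1fn_bound hFrange hC1 hθ0M u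
  · refine Eventually.of_forall fun u _ θ hθ => ?_
    have hθM : |θ| ≤ M := abs_theta_le_of_ball hθ
    simpa [Real.norm_eq_abs] using G2fn_bound hFrange hC1 hC2' hθM u
  · refine Eventually.of_forall fun u _ θ _ => ?_
    exact hasDerivAt_G1 hψ'diff θ (F u) (hFrange u).1 (hFrange u).2

lemma keyC (hC2 : ContDiff ℝ 2 ψ) (hFrange : ∀ u, 0 ≤ F u ∧ F u ≤ 1)
    (hFmono : Monotone F) (t : ℝ) :
    Continuous fun θ => ∫ u in (0:ℝ)..t, G2fn ψ F θ u := by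
  have hψ'cont : Continuous (deriv ψ) := hC2.continuous_deriv (by norm_num)
  have hC1d : ContDiff ℝ 1 (deriv ψ) := by
    have h21 : (2 : WithTop ℕ∞) = 1 + 1 := by norm_num
    exact (contDiff_succ_iff_deriv.mp (h21 ▸ hC2)).2.2
  have hψ''cont : Continuous (deriv (deriv ψ)) := hC1d.continuous_deriv le_rfl
  have hFm : Measurable F := hFmono.measurable
  rw [continuous_iff_continuousAt]
  intro θ0
  set M : ℝ := |θ0| + 1 with hM
  obtain ⟨C1, hC1⟩ := (isCompact_Icc (a := -M) (b := M)).exists_bound_of_continuousOn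
    hψ'cont.continuousOn
  obtain ⟨C2, hC2'⟩ := (isCompact_Icc (a := -M) (b := M)).exists_bound_of_continuousOn
    hψ''cont.continuousOn
  refine intervalIntegral.continuousAt_of_dominated_interval
      (bound := fun _ => C2 + C1 * Real.exp M)
      (Eventually.of_forall fun θ => (measurable_G2fn hψ'cont hψ''cont hFm θ).aestronglyMeasurable)
      ?_ intervalIntegrable_const ?_
  · filter_upwards [Metric.ball_mem_nhds θ0 one_pos] with θ hθ
    refine Eventually.of_forall fun u _ => ?_
    have hθM : |θ| ≤ M := abs_theta_le_of_ball hθ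
    simpa [Real.norm_eq_abs] using G2fn_bound hFrange hC1 hC2' hθM u
  · refine Eventually.of_forall fun u _ => ?_
    have h0 := (hFrange u).1
    have h1 := (hFrange u).2
    have hscont : Continuous fun θ => Real.exp θ * (1 - F u) + F u :=
      (Real.continuous_exp.mul continuous_const).add continuous_const
    have hsne : ∀ θ : ℝ, Real.exp θ * (1 - F u) + F u ≠ 0 := fun θ => (spos h0 h1).ne'
    have hLcont : Continuous fun θ => Real.log (Real.exp θ * (1 - F u) + F u) :=
      Real.continuousOn_log.comp_continuous hscont fun θ =>
        Set.mem_compl_singleton_iff.mpr (hsne θ)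
    have hrcont : Continuous fun θ => Real.exp θ * (1 - F u) / (Real.exp θ * (1 - F u) + F u) :=
      (Real.continuous_exp.mul continuous_const).div hscont hsne
    have hqcont : Continuous fun θ =>
        Real.exp θ * (1 - F u) * F u / (Real.exp θ * (1 - F u) + F u) ^ 2 :=
      ((Real.continuous_exp.mul continuous_const).mul continuous_const).div
        (hscont.pow 2) fun θ => pow_ne_zero 2 (hsne θ)
    exact (((hψ''cont.comp hLcont).mul (hrcont.pow 2)).add
      ((hψ'cont.comp hLcont).mul hqcont)).continuousAt

end Main2
/-- `ψ_t(θ) = ∫_0^t ψ_N(log(e^θ F̄(u) + F(u))) du` is twice continuously differentiable,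
strictly convex and steep, with the stated derivative formula. -/
theorem psi_t_properties
    (psiN F : ℝ → ℝ) (lam t : ℝ)
    (hC2 : ContDiff ℝ 2 psiN)
    (hmono : StrictMono psiN)
    (hconv : StrictConvexOn ℝ Set.univ psiN)
    (hsteep : Tendsto (deriv psiN) atTop atTop)
    (hd0 : deriv psiN 0 = lam) (hlam : 0 < lam)
    (hFrange : ∀ u, 0 ≤ F u ∧ F u ≤ 1) (hFmono : Monotone F)
    (ht : 0 < t)
    (hpos : 0 < MeasureTheory.volume {u : ℝ | u ∈ Set.Icc 0 t ∧ F u < 1}) :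
    ContDiff ℝ 2 (fun θ : ℝ => ∫ u in (0:ℝ)..t,
        psiN (Real.log (Real.exp θ * (1 - F u) + F u))) ∧
    StrictConvexOn ℝ Set.univ (fun θ : ℝ => ∫ u in (0:ℝ)..t,
        psiN (Real.log (Real.exp θ * (1 - F u) + F u))) ∧
    Tendsto (deriv (fun θ : ℝ => ∫ u in (0:ℝ)..t,
        psiN (Real.log (Real.exp θ * (1 - F u) + F u)))) atTop atTop ∧
    (∀ θ : ℝ, deriv (fun θ : ℝ => ∫ u in (0:ℝ)..t,
        psiN (Real.log (Real.exp θ * (1 - F u) + F u))) θ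
      = ∫ u in (0:ℝ)..t,
          deriv psiN (Real.log (Real.exp θ * (1 - F u) + F u)) *
            (Real.exp θ * (1 - F u) / (Real.exp θ * (1 - F u) + F u))) := by
  have hψdiff : Differentiable ℝ psiN := hC2.differentiable (by norm_num)
  have hψ'mono : StrictMono (deriv psiN) := fun x y hxy =>
    hconv.strictMonoOn_deriv (fun z _ => hψdiff z) (Set.mem_univ x) (Set.mem_univ y) hxy
  have hψ'nonneg : ∀ x, 0 ≤ deriv psiN x := deriv_nonneg_of_monotone hmono.monotone hψdiff
  have h0 : ∀ u, 0 ≤ F u := fun u => (hFrange u).1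
  have h1 : ∀ u, F u ≤ 1 := fun u => (hFrange u).2
  have hA := fun θ0 : ℝ => keyA hC2 hFrange hFmono t θ0
  have hB := fun θ0 : ℝ => keyB hC2 hFrange hFmono t θ0
  have hCc := keyC hC2 hFrange hFmono t
  have hd1at : ∀ θ : ℝ, HasDerivAt (fun θ : ℝ => ∫ u in (0:ℝ)..t,
      psiN (Real.log (Real.exp θ * (1 - F u) + F u))) (∫ u in (0:ℝ)..t, G1fn psiN F θ u) θ :=
    fun θ => (hA θ).2
  have hderiv1 : deriv (fun θ : ℝ => ∫ u in (0:ℝ)..t,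
      psiN (Real.log (Real.exp θ * (1 - F u) + F u))) =
      fun θ => ∫ u in (0:ℝ)..t, G1fn psiN F θ u := funext fun θ => (hd1at θ).deriv
  have hderiv2 : deriv (fun θ : ℝ => ∫ u in (0:ℝ)..t, G1fn psiN F θ u) =
      fun θ => ∫ u in (0:ℝ)..t, G2fn psiN F θ u := funext fun θ => (hB θ).deriv
  -- strict monotonicity of the derivative
  have hsm : StrictMono (fun θ : ℝ => ∫ u in (0:ℝ)..t, G1fn psiN F θ u) := by
    intro θ1 θ2 h12
    have hint1 : IntegrableOn (fun u => G1fn psiN F θ1 u) (Set.Ioc 0 t) volume :=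
      (intervalIntegrable_iff_integrableOn_Ioc_of_le ht.le).1 (hA θ1).1
    have hint2 : IntegrableOn (fun u => G1fn psiN F θ2 u) (Set.Ioc 0 t) volume :=
      (intervalIntegrable_iff_integrableOn_Ioc_of_le ht.le).1 (hA θ2).1
    have hmono_all : ∀ u, G1fn psiN F θ1 u ≤ G1fn psiN F θ2 u := fun u =>
      (G1_mono hψ'mono hψ'nonneg h12 (h0 u) (h1 u)).1
    have hpos' : 0 < ∫ u in Set.Ioc (0:ℝ) t, (G1fn psiN F θ2 u - G1fn psiN F θ1 u) := by
      rw [MeasureTheory.setIntegral_pos_iff_support_of_nonneg_ae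
        (Filter.Eventually.of_forall fun u => sub_nonneg.2 (hmono_all u)) (hint2.sub hint1)]
      refine lt_of_lt_of_le ?_ (measure_mono (?_ :
        ({u : ℝ | u ∈ Set.Icc 0 t ∧ F u < 1} \ {0}) ⊆ _))
      · rw [measure_diff_null (measure_singleton 0)]
        exact hpos
      · rintro u ⟨⟨⟨hu0, hut⟩, hFu⟩, hune⟩
        refine ⟨Function.mem_support.2 (ne_of_gt (sub_pos.2
          ((G1_mono hψ'mono hψ'nonneg h12 (h0 u) (h1 u)).2 hFu))), ?_, hut⟩
        exact lt_of_le_of_ne hu0 (Ne.symm (by simpa using hune))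
    have heq := MeasureTheory.integral_sub hint2 hint1
    simp only [intervalIntegral.integral_of_le ht.le]
    have : (∫ u in Set.Ioc (0:ℝ) t, (G1fn psiN F θ2 u - G1fn psiN F θ1 u)) =
        (∫ u in Set.Ioc (0:ℝ) t, G1fn psiN F θ2 u) -
        (∫ u in Set.Ioc (0:ℝ) t, G1fn psiN F θ1 u) := heq
    linarith
  refine ⟨?_, ?_, ?_, fun θ => (hd1at θ).deriv⟩
  · -- C²
    rw [show (2 : WithTop ℕ∞) = 1 + 1 by norm_num, contDiff_succ_iff_deriv]
    refine ⟨fun θ => (hd1at θ).differentiableAt, by simp, ?_⟩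
    rw [hderiv1, contDiff_one_iff_deriv]
    exact ⟨fun θ => (hB θ).differentiableAt, by rw [hderiv2]; exact hCc⟩
  · -- strict convexity
    refine StrictMonoOn.strictConvexOn_of_deriv convex_univ ?_ ?_
    · exact (Differentiable.continuous fun θ => (hd1at θ).differentiableAt).continuousOn
    · rw [interior_univ, hderiv1]
      exact hsm.strictMonoOn _
  · -- steepness
    have hne0 : MeasureTheory.volume (({u : ℝ | u ∈ Set.Icc 0 t ∧ F u < 1}) \ {0}) ≠ 0 := by
      rw [measure_diff_null (measure_singleton 0)]
      exact hpos.ne'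
    obtain ⟨u0, hu0mem⟩ : (({u : ℝ | u ∈ Set.Icc 0 t ∧ F u < 1}) \ {0}).Nonempty :=
      MeasureTheory.nonempty_of_measure_ne_zero hne0
    obtain ⟨⟨⟨hu00, hu0t⟩, hFu0⟩, hu0ne⟩ := hu0mem
    have hu0pos : 0 < u0 := lt_of_le_of_ne hu00 (Ne.symm (by simpa using hu0ne))
    set ε := 1 - F u0 with hε
    have hεpos : 0 < ε := by rw [hε]; linarith
    have hlow : ∀ θ : ℝ, Real.log (2 / ε) ≤ θ →
        u0 / 2 * deriv psiN (θ + Real.log ε) ≤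
        deriv (fun θ : ℝ => ∫ u in (0:ℝ)..t,
          psiN (Real.log (Real.exp θ * (1 - F u) + F u))) θ := by
      intro θ hθ
      have hexp2 : 2 ≤ Real.exp θ * ε := by
        have hle : 2 / ε ≤ Real.exp θ := by
          rw [← Real.exp_log (by positivity : (0:ℝ) < 2/ε)]
          exact Real.exp_le_exp.2 hθ
        rw [div_le_iff₀ hεpos] at hle
        linarith
      have hG1low : ∀ u ∈ Set.Ioc (0:ℝ) u0,
          deriv psiN (θ + Real.log ε) * (1/2) ≤ G1fn psiN F θ u := by
        intro u hu
        have hFle : F u ≤ 1 - ε := by rw [hε]; simpa using hFmono hu.2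
        have hbε : ε ≤ 1 - F u := by linarith
        have hsp : 0 < Real.exp θ * (1 - F u) + F u := spos (h0 u) (h1 u)
        have hse : Real.exp θ * ε ≤ Real.exp θ * (1 - F u) := by nlinarith [Real.exp_pos θ]
        have hsge : Real.exp θ * ε ≤ Real.exp θ * (1 - F u) + F u := by linarith [h0 u]
        have hLge : θ + Real.log ε ≤ Real.log (Real.exp θ * (1 - F u) + F u) := by
          have hlm : Real.log (Real.exp θ * ε) = θ + Real.log ε := by
            rw [Real.log_mul (Real.exp_ne_zero θ) hεpos.ne', Real.log_exp]
          rw [← hlm]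
          exact Real.log_le_log (by positivity) hsge
        have hψle : deriv psiN (θ + Real.log ε) ≤
            deriv psiN (Real.log (Real.exp θ * (1 - F u) + F u)) := hψ'mono.monotone hLge
        have hrge : 1/2 ≤ Real.exp θ * (1 - F u) / (Real.exp θ * (1 - F u) + F u) := by
          rw [le_div_iff₀ hsp]
          nlinarith [h1 u, h0 u, Real.exp_pos θ]
        exact mul_le_mul hψle hrge (by norm_num) (hψ'nonneg _)
      have hup : IntegrableOn (fun u => G1fn psiN F θ u) (Set.Ioc 0 t) volume :=
        (intervalIntegrable_iff_integrableOn_Ioc_of_le ht.le).1 (hA θ).1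
      have hup0 : IntegrableOn (fun u => G1fn psiN F θ u) (Set.Ioc 0 u0) volume :=
        hup.mono_set (Set.Ioc_subset_Ioc_right hu0t)
      have hnn : ∀ u, 0 ≤ G1fn psiN F θ u := fun u =>
        mul_nonneg (hψ'nonneg _) (r_nonneg (h0 u) (h1 u))
      have step1 : (∫ u in Set.Ioc (0:ℝ) u0, G1fn psiN F θ u) ≤
          ∫ u in Set.Ioc (0:ℝ) t, G1fn psiN F θ u :=
        MeasureTheory.setIntegral_mono_set hup (Filter.Eventually.of_forall fun u => hnn u)
          (HasSubset.Subset.eventuallyLE (Set.Ioc_subset_Ioc_right hu0t))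
      have step2 := MeasureTheory.setIntegral_ge_of_const_le_real measurableSet_Ioc
        measure_Ioc_lt_top.ne hG1low hup0
      have hvol : volume.real (Set.Ioc (0:ℝ) u0) = u0 := by
        rw [Real.volume_real_Ioc]
        simp [hu0pos.le]
      rw [hvol] at step2
      rw [(hd1at θ).deriv, intervalIntegral.integral_of_le ht.le]
      calc u0/2 * deriv psiN (θ + Real.log ε)
          = deriv psiN (θ + Real.log ε) * (1/2) * u0 := by ring
        _ ≤ ∫ u in Set.Ioc (0:ℝ) u0, G1fn psiN F θ u := step2
        _ ≤ _ := step1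
    have htend : Tendsto (fun θ => u0/2 * deriv psiN (θ + Real.log ε)) atTop atTop :=
      Tendsto.const_mul_atTop (by positivity)
        (hsteep.comp (tendsto_atTop_add_const_right atTop (Real.log ε) tendsto_id))
    refine tendsto_atTop_mono' atTop ?_ htend
    filter_upwards [eventually_ge_atTop (Real.log (2/ε))] with θ hθ using hlow θ hθ
end

section
/- For each t > 0 let \theta_t be the unique positive solution of \psi_t'(\theta) = a_t where a_t = 1 - \lambda \int_t^\infty \bar{F}(u)du. Then t \mapsto \theta_t is non-increasing on (0,\infty). -/
open Filter MeasureTheory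

namespace ThetaAux

lemma pos_comb {a b : ℝ} (x : ℝ) (ha : 0 ≤ a) (hb : 0 ≤ b) (hab : a + b = 1) :
    0 < Real.exp x * a + b := by
  have hx := Real.exp_pos x
  rcases le_total (Real.exp x) 1 with h | h
  · have h1 : Real.exp x * (a + b) = Real.exp x := by rw [hab, mul_one]
    nlinarith [mul_nonneg hb (sub_nonneg.mpr h)]
  · nlinarith [mul_nonneg ha (sub_nonneg.mpr h)]

lemma hasDerivAt_inner (a b x : ℝ) (h : 0 < Real.exp x * a + b) :
    HasDerivAt (fun y => Real.log (Real.exp y * a + b))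
      (Real.exp x * a / (Real.exp x * a + b)) x :=
  (((Real.hasDerivAt_exp x).mul_const a).add_const b).log h.ne'

lemma convex_log_comb {a b : ℝ} (ha : 0 ≤ a) (hb : 0 ≤ b) (hab : a + b = 1) :
    ConvexOn ℝ Set.univ (fun y => Real.log (Real.exp y * a + b)) := by
  have hpos : ∀ x : ℝ, 0 < Real.exp x * a + b := fun x => pos_comb x ha hb hab
  have hd : ∀ x : ℝ, HasDerivAt (fun y => Real.log (Real.exp y * a + b))
      (Real.exp x * a / (Real.exp x * a + b)) x := fun x => hasDerivAt_inner a b x (hpos x)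
  refine Monotone.convexOn_univ_of_deriv (fun x => (hd x).differentiableAt) ?_
  intro x y hxy
  rw [(hd x).deriv, (hd y).deriv, div_le_div_iff₀ (hpos x) (hpos y)]
  have hexy : Real.exp x ≤ Real.exp y := Real.exp_le_exp.mpr hxy
  nlinarith [mul_nonneg (mul_nonneg ha hb) (sub_nonneg.mpr hexy)]

lemma convexG {psiN : ℝ → ℝ} (hmono : Monotone psiN) (hconv : ConvexOn ℝ Set.univ psiN)
    {a b : ℝ} (ha : 0 ≤ a) (hb : 0 ≤ b) (hab : a + b = 1) :
    ConvexOn ℝ Set.univ (fun y => psiN (Real.log (Real.exp y * a + b))) := by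
  refine ⟨convex_univ, fun x _ y _ p q hp hq hpq => ?_⟩
  have h1 := (convex_log_comb ha hb hab).2 (Set.mem_univ x) (Set.mem_univ y) hp hq hpq
  have h2 := hconv.2 (Set.mem_univ (Real.log (Real.exp x * a + b)))
      (Set.mem_univ (Real.log (Real.exp y * a + b))) hp hq hpq
  exact le_trans (hmono h1) h2

lemma hasDerivAtG {psiN : ℝ → ℝ} (hdiff : Differentiable ℝ psiN) (a b x : ℝ)
    (h : 0 < Real.exp x * a + b) :
    HasDerivAt (fun y => psiN (Real.log (Real.exp y * a + b)))
      (deriv psiN (Real.log (Real.exp x * a + b)) * (Real.exp x * a / (Real.exp x * a + b))) x :=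
  (hdiff _).hasDerivAt.comp x (hasDerivAt_inner a b x h)

lemma point_bound {psiN : ℝ → ℝ} (hdiff : Differentiable ℝ psiN) (hmono : Monotone psiN)
    (hconv : ConvexOn ℝ Set.univ psiN) (hDmono : Monotone (deriv psiN))
    (hD0 : 0 ≤ deriv psiN 0)
    {θs θt a b : ℝ} (hθs : 0 < θs) (hst : θs < θt) (ha : 0 ≤ a) (hb : 0 ≤ b) (hab : a + b = 1) :
    deriv psiN (Real.log (Real.exp θs * a + b)) * a * (θt - θs)
      ≤ psiN (Real.log (Real.exp θt * a + b)) - psiN (Real.log (Real.exp θs * a + b)) := by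
  have hpos := pos_comb θs ha hb hab
  have hG := hasDerivAtG hdiff a b θs hpos
  have hcG := convexG hmono hconv ha hb hab
  have hΔ : 0 < θt - θs := sub_pos.mpr hst
  have hsl := hcG.deriv_le_slope (Set.mem_univ θs) (Set.mem_univ θt) hst hG.differentiableAt
  rw [hG.deriv, slope_def_field, le_div_iff₀ hΔ] at hsl
  have hexp1 : (1:ℝ) ≤ Real.exp θs := by
    simpa using Real.exp_le_exp.mpr hθs.le
  have hL : 0 ≤ Real.log (Real.exp θs * a + b) :=
    Real.log_nonneg (by nlinarith [mul_nonneg ha (sub_nonneg.mpr hexp1)])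
  have hDnn : 0 ≤ deriv psiN (Real.log (Real.exp θs * a + b)) := le_trans hD0 (hDmono hL)
  have hfrac : a ≤ Real.exp θs * a / (Real.exp θs * a + b) := by
    rw [le_div_iff₀ hpos]
    nlinarith [mul_nonneg (mul_nonneg ha hb) (sub_nonneg.mpr hexp1)]
  refine le_trans ?_ hsl
  have := mul_le_mul_of_nonneg_left hfrac hDnn
  nlinarith [hΔ.le]

lemma intF {F : ℝ → ℝ} (hFmono : Monotone F) (hFr : ∀ u, 0 ≤ F u ∧ F u ≤ 1) (c d : ℝ) :
    IntervalIntegrable (fun u => 1 - F u) volume c d := by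
  rw [intervalIntegrable_iff]
  refine Measure.integrableOn_of_bounded (M := 1)
    (by rw [Set.uIoc]; exact measure_Ioc_lt_top.ne)
    ((measurable_const.sub hFmono.measurable).aestronglyMeasurable) ?_
  refine ae_of_all _ fun u => ?_
  rw [Real.norm_eq_abs, abs_le]
  exact ⟨by linarith [(hFr u).2], by linarith [(hFr u).1]⟩

lemma intble {psiN F : ℝ → ℝ} (hpsiC : Continuous psiN) (hmono : Monotone psiN)
    (hFmono : Monotone F) (hFr : ∀ u, 0 ≤ F u ∧ F u ≤ 1) (x c d : ℝ) :
    IntervalIntegrable (fun u => psiN (Real.log (Real.exp x * (1 - F u) + F u))) volume c d := by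
  rw [intervalIntegrable_iff]
  refine Measure.integrableOn_of_bounded (M := |psiN (min x 0)| + |psiN (max x 0)|)
    (by rw [Set.uIoc]; exact measure_Ioc_lt_top.ne) ?_ ?_
  · exact (hpsiC.measurable.comp (Real.measurable_log.comp
      (((measurable_const.sub hFmono.measurable).const_mul (Real.exp x)).add
        hFmono.measurable))).aestronglyMeasurable
  · refine ae_of_all _ fun u => ?_
    obtain ⟨h0, h1⟩ := hFr u
    have hz1 : Real.exp (min x 0) ≤ Real.exp x * (1 - F u) + F u := by
      rcases le_total x 0 with h | h
      · rw [min_eq_left h]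
        have hx1 : Real.exp x ≤ 1 := by simpa using Real.exp_le_exp.mpr h
        nlinarith [mul_nonneg h0 (sub_nonneg.mpr hx1)]
      · rw [min_eq_right h, Real.exp_zero]
        have hx1 : (1:ℝ) ≤ Real.exp x := by simpa using Real.exp_le_exp.mpr h
        nlinarith [mul_nonneg (sub_nonneg.mpr h1) (sub_nonneg.mpr hx1)]
    have hz2 : Real.exp x * (1 - F u) + F u ≤ Real.exp (max x 0) := by
      rcases le_total x 0 with h | h
      · rw [max_eq_right h, Real.exp_zero]
        have hx1 : Real.exp x ≤ 1 := by simpa using Real.exp_le_exp.mpr h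
        nlinarith [mul_nonneg (sub_nonneg.mpr h1) (sub_nonneg.mpr hx1)]
      · rw [max_eq_left h]
        have hx1 : (1:ℝ) ≤ Real.exp x := by simpa using Real.exp_le_exp.mpr h
        nlinarith [mul_nonneg h0 (sub_nonneg.mpr hx1)]
    have hzpos : 0 < Real.exp x * (1 - F u) + F u := lt_of_lt_of_le (Real.exp_pos _) hz1
    have hlog1 : min x 0 ≤ Real.log (Real.exp x * (1 - F u) + F u) := by
      calc min x 0 = Real.log (Real.exp (min x 0)) := (Real.log_exp _).symm
        _ ≤ _ := Real.log_le_log (Real.exp_pos _) hz1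
    have hlog2 : Real.log (Real.exp x * (1 - F u) + F u) ≤ max x 0 := by
      calc Real.log (Real.exp x * (1 - F u) + F u)
          ≤ Real.log (Real.exp (max x 0)) := Real.log_le_log hzpos hz2
        _ = max x 0 := Real.log_exp _
    rw [Real.norm_eq_abs, abs_le]
    constructor
    · linarith [neg_abs_le (psiN (min x 0)), abs_nonneg (psiN (max x 0)), hmono hlog1]
    · linarith [le_abs_self (psiN (max x 0)), abs_nonneg (psiN (min x 0)), hmono hlog2]

lemma convPhi {psiN F : ℝ → ℝ} (hpsiC : Continuous psiN) (hmono : Monotone psiN)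
    (hconv : ConvexOn ℝ Set.univ psiN) (hFmono : Monotone F)
    (hFr : ∀ u, 0 ≤ F u ∧ F u ≤ 1) {t : ℝ} (ht : 0 ≤ t) :
    ConvexOn ℝ Set.univ
      (fun x => ∫ u in (0:ℝ)..t, psiN (Real.log (Real.exp x * (1 - F u) + F u))) := by
  refine ⟨convex_univ, fun x _ y _ p q hp hq hpq => ?_⟩
  simp only [smul_eq_mul]
  have hix := intble hpsiC hmono hFmono hFr x 0 t
  have hiy := intble hpsiC hmono hFmono hFr y 0 t
  have hixy := intble hpsiC hmono hFmono hFr (p * x + q * y) 0 t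
  calc (∫ u in (0:ℝ)..t, psiN (Real.log (Real.exp (p * x + q * y) * (1 - F u) + F u)))
      ≤ ∫ u in (0:ℝ)..t, (p * psiN (Real.log (Real.exp x * (1 - F u) + F u))
          + q * psiN (Real.log (Real.exp y * (1 - F u) + F u))) := by
        refine intervalIntegral.integral_mono_on ht hixy
          ((hix.const_mul p).add (hiy.const_mul q)) fun u _ => ?_
        have h := (convexG hmono hconv (a := 1 - F u) (b := F u)
          (sub_nonneg.mpr (hFr u).2) (hFr u).1 (by ring)).2
          (Set.mem_univ x) (Set.mem_univ y) hp hq hpq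
        simpa [smul_eq_mul] using h
    _ = p * (∫ u in (0:ℝ)..t, psiN (Real.log (Real.exp x * (1 - F u) + F u)))
          + q * ∫ u in (0:ℝ)..t, psiN (Real.log (Real.exp y * (1 - F u) + F u)) := by
        rw [intervalIntegral.integral_add (hix.const_mul p) (hiy.const_mul q),
          intervalIntegral.integral_const_mul, intervalIntegral.integral_const_mul]

end ThetaAux

open Filter MeasureTheory

set_option maxHeartbeats 1000000 in
/-- The tilting parameter `θ_t`, the unique positive solution of `ψ_t'(θ) = a_t`
with `a_t = 1 - λ∫_t^∞ F̄(u)du`, is non-increasing in `t` on `(0,∞)`. -/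
theorem theta_t_antitone
    (psiN F : ℝ → ℝ) (lam EV : ℝ)
    (hC2 : ContDiff ℝ 2 psiN)
    (hmono : StrictMono psiN)
    (hconv : StrictConvexOn ℝ Set.univ psiN)
    (hsteep : Tendsto (deriv psiN) atTop atTop)
    (hd0 : deriv psiN 0 = lam) (hlam : 0 < lam)
    (hFrange : ∀ u, 0 ≤ F u ∧ F u ≤ 1) (hFmono : Monotone F)
    (hEV : EV = ∫ u in Set.Ioi (0:ℝ), (1 - F u)) (hrho : lam * EV < 1)
    (θ : ℝ → ℝ)
    (hθ : ∀ t > (0:ℝ), 0 < θ t ∧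
      deriv (fun x : ℝ => ∫ u in (0:ℝ)..t,
          psiN (Real.log (Real.exp x * (1 - F u) + F u))) (θ t)
        = 1 - lam * ∫ u in Set.Ioi t, (1 - F u))
    (huniq : ∀ t > (0:ℝ), ∀ x > (0:ℝ),
      deriv (fun x : ℝ => ∫ u in (0:ℝ)..t,
          psiN (Real.log (Real.exp x * (1 - F u) + F u))) x
        = 1 - lam * ∫ u in Set.Ioi t, (1 - F u) → x = θ t) :
    AntitoneOn θ (Set.Ioi 0) := by
  have hpsiD : Differentiable ℝ psiN := hC2.differentiable (by norm_num)
  have hpsiC : Continuous psiN := hpsiD.continuous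
  have hpsiM : Monotone psiN := hmono.monotone
  have hpsiCv : ConvexOn ℝ Set.univ psiN := hconv.convexOn
  have dStrict : StrictMono (deriv psiN) := fun x y hxy =>
    (hconv.deriv_lt_slope (Set.mem_univ x) (Set.mem_univ y) hxy (hpsiD x)).trans
      (hconv.slope_lt_deriv (Set.mem_univ x) (Set.mem_univ y) hxy (hpsiD y))
  have hDmono : Monotone (deriv psiN) := dStrict.monotone
  have hD0 : 0 ≤ deriv psiN 0 := by rw [hd0]; exact hlam.le
  have hFnn : ∀ u : ℝ, (0:ℝ) ≤ 1 - F u := fun u => sub_nonneg.mpr (hFrange u).2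
  have hint : ∀ (x c d : ℝ), IntervalIntegrable
      (fun u => psiN (Real.log (Real.exp x * (1 - F u) + F u))) volume c d :=
    fun x c d => ThetaAux.intble hpsiC hpsiM hFmono hFrange x c d
  have hIF : ∀ c d : ℝ, IntervalIntegrable (fun u => 1 - F u) volume c d :=
    fun c d => ThetaAux.intF hFmono hFrange c d
  -- positivity of a_r
  have apos : ∀ r : ℝ, 0 < r → 0 < 1 - lam * ∫ u in Set.Ioi r, (1 - F u) := by
    intro r hr
    by_cases hInt : IntegrableOn (fun u => 1 - F u) (Set.Ioi r) volume
    · have hIoc : IntegrableOn (fun u => 1 - F u) (Set.Ioc 0 r) volume := by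
        have := hIF 0 r
        rwa [intervalIntegrable_iff, Set.uIoc_of_le hr.le] at this
      have hsplit : (∫ u in Set.Ioi (0:ℝ), (1 - F u))
          = (∫ u in Set.Ioc (0:ℝ) r, (1 - F u)) + ∫ u in Set.Ioi r, (1 - F u) := by
        rw [← Set.Ioc_union_Ioi_eq_Ioi hr.le]
        exact setIntegral_union (Set.Ioc_disjoint_Ioi le_rfl) measurableSet_Ioi hIoc hInt
      have h1 : 0 ≤ ∫ u in Set.Ioc (0:ℝ) r, (1 - F u) :=
        setIntegral_nonneg measurableSet_Ioc fun u _ => hFnn u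
      have h2 : (∫ u in Set.Ioi r, (1 - F u)) ≤ EV := by rw [hEV, hsplit]; linarith
      have := mul_le_mul_of_nonneg_left h2 hlam.le
      linarith
    · rw [integral_undef hInt, mul_zero]; norm_num
  intro s hs t ht hst
  rcases eq_or_lt_of_le hst with rfl | hlt
  · exact le_rfl
  simp only [Set.mem_Ioi] at hs ht
  obtain ⟨hθs_pos, hθs⟩ := hθ s hs
  obtain ⟨hθt_pos, hθt⟩ := hθ t ht
  by_cases hex : ∃ u ∈ Set.Ioo s t, F u < 1
  · -- Case A : strict argument, by contradiction
    obtain ⟨u', ⟨hsu', hu't⟩, hFu'⟩ := hex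
    by_contra hcon
    push_neg at hcon
    have hΔ : 0 < θ t - θ s := sub_pos.mpr hcon
    have hcpos : 0 < 1 - F u' := sub_pos.mpr hFu'
    have hexp1 : (1:ℝ) ≤ Real.exp (θ s) := by
      simpa using Real.exp_le_exp.mpr hθs_pos.le
    set M := deriv psiN (Real.log (Real.exp (θ s) * (1 - F u') + F u')) with hMdef
    have hlamM : lam < M := by
      rw [hMdef, ← hd0]
      apply dStrict
      apply Real.log_pos
      have hexp1' : (1:ℝ) < Real.exp (θ s) := by
        simpa using Real.exp_lt_exp.mpr hθs_pos
      nlinarith [mul_pos hcpos (sub_pos.mpr hexp1')]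
    -- I₁ and I₂
    have hI₁pos : 0 < ∫ u in s..u', (1 - F u) := by
      have hle : ∀ u ∈ Set.Icc s u', (fun _ : ℝ => 1 - F u') u ≤ 1 - F u :=
        fun u hu => by have := hFmono hu.2; simp; linarith
      have hm := intervalIntegral.integral_mono_on hsu'.le
        (intervalIntegrable_const) (hIF s u') hle
      rw [intervalIntegral.integral_const, smul_eq_mul] at hm
      nlinarith
    have hI₂nn : 0 ≤ ∫ u in u'..t, (1 - F u) :=
      intervalIntegral.integral_nonneg hu't.le fun u _ => hFnn u
    have hsubint : ∀ c d : ℝ, IntervalIntegrable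
        (fun u => psiN (Real.log (Real.exp (θ t) * (1 - F u) + F u))
          - psiN (Real.log (Real.exp (θ s) * (1 - F u) + F u))) volume c d :=
      fun c d => (hint (θ t) c d).sub (hint (θ s) c d)
    -- pointwise lower bounds on the difference integrand
    have hbound1 : (M * (θ t - θ s)) * (∫ u in s..u', (1 - F u))
        ≤ ∫ u in s..u', (psiN (Real.log (Real.exp (θ t) * (1 - F u) + F u))
            - psiN (Real.log (Real.exp (θ s) * (1 - F u) + F u))) := by
      have hm := intervalIntegral.integral_mono_on hsu'.le
        ((hIF s u').const_mul (M * (θ t - θ s)))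
        (hsubint s u') ?_
      · rwa [intervalIntegral.integral_const_mul] at hm
      intro u hu
      have ha : 0 ≤ 1 - F u := hFnn u
      have hb : 0 ≤ F u := (hFrange u).1
      have hp := ThetaAux.point_bound hpsiD hpsiM hpsiCv hDmono hD0 hθs_pos hcon
        ha hb (by ring : (1 - F u) + F u = 1)
      refine le_trans ?_ hp
      have hML : M ≤ deriv psiN (Real.log (Real.exp (θ s) * (1 - F u) + F u)) := by
        rw [hMdef]
        apply hDmono
        apply Real.log_le_log (ThetaAux.pos_comb _ hcpos.le (hFrange u').1 (by ring))
        have hac : 1 - F u' ≤ 1 - F u := by have := hFmono hu.2; linarith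
        nlinarith [sub_nonneg.mpr hac]
      nlinarith [mul_nonneg (mul_nonneg (sub_nonneg.mpr hML) ha) hΔ.le]
    have hbound2 : (lam * (θ t - θ s)) * (∫ u in u'..t, (1 - F u))
        ≤ ∫ u in u'..t, (psiN (Real.log (Real.exp (θ t) * (1 - F u) + F u))
            - psiN (Real.log (Real.exp (θ s) * (1 - F u) + F u))) := by
      have hm := intervalIntegral.integral_mono_on hu't.le
        ((hIF u' t).const_mul (lam * (θ t - θ s)))
        (hsubint u' t) ?_
      · rwa [intervalIntegral.integral_const_mul] at hm
      intro u hu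
      have ha : 0 ≤ 1 - F u := hFnn u
      have hb : 0 ≤ F u := (hFrange u).1
      have hp := ThetaAux.point_bound hpsiD hpsiM hpsiCv hDmono hD0 hθs_pos hcon
        ha hb (by ring : (1 - F u) + F u = 1)
      refine le_trans ?_ hp
      have hML : lam ≤ deriv psiN (Real.log (Real.exp (θ s) * (1 - F u) + F u)) := by
        rw [← hd0]
        apply hDmono
        apply Real.log_nonneg
        nlinarith [mul_nonneg ha (sub_nonneg.mpr hexp1)]
      nlinarith [mul_nonneg (mul_nonneg (sub_nonneg.mpr hML) ha) hΔ.le]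
    -- adjacent-interval splittings
    have hadj : (∫ u in s..u', (psiN (Real.log (Real.exp (θ t) * (1 - F u) + F u))
            - psiN (Real.log (Real.exp (θ s) * (1 - F u) + F u))))
        + (∫ u in u'..t, (psiN (Real.log (Real.exp (θ t) * (1 - F u) + F u))
            - psiN (Real.log (Real.exp (θ s) * (1 - F u) + F u))))
        = ∫ u in s..t, (psiN (Real.log (Real.exp (θ t) * (1 - F u) + F u))
            - psiN (Real.log (Real.exp (θ s) * (1 - F u) + F u))) :=
      intervalIntegral.integral_add_adjacent_intervals (hsubint s u') (hsubint u' t)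
    have hsub : (∫ u in s..t, (psiN (Real.log (Real.exp (θ t) * (1 - F u) + F u))
            - psiN (Real.log (Real.exp (θ s) * (1 - F u) + F u))))
        = (∫ u in s..t, psiN (Real.log (Real.exp (θ t) * (1 - F u) + F u)))
          - ∫ u in s..t, psiN (Real.log (Real.exp (θ s) * (1 - F u) + F u)) :=
      intervalIntegral.integral_sub (hint (θ t) s t) (hint (θ s) s t)
    have hsplit_t : (∫ u in (0:ℝ)..s, psiN (Real.log (Real.exp (θ t) * (1 - F u) + F u)))
        + (∫ u in s..t, psiN (Real.log (Real.exp (θ t) * (1 - F u) + F u)))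
        = ∫ u in (0:ℝ)..t, psiN (Real.log (Real.exp (θ t) * (1 - F u) + F u)) :=
      intervalIntegral.integral_add_adjacent_intervals (hint (θ t) 0 s) (hint (θ t) s t)
    have hsplit_s : (∫ u in (0:ℝ)..s, psiN (Real.log (Real.exp (θ s) * (1 - F u) + F u)))
        + (∫ u in s..t, psiN (Real.log (Real.exp (θ s) * (1 - F u) + F u)))
        = ∫ u in (0:ℝ)..t, psiN (Real.log (Real.exp (θ s) * (1 - F u) + F u)) :=
      intervalIntegral.integral_add_adjacent_intervals (hint (θ s) 0 s) (hint (θ s) s t)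
    -- convexity slope inequalities
    have key1 : (∫ u in (0:ℝ)..t, psiN (Real.log (Real.exp (θ t) * (1 - F u) + F u)))
        - (∫ u in (0:ℝ)..t, psiN (Real.log (Real.exp (θ s) * (1 - F u) + F u)))
        ≤ (1 - lam * ∫ u in Set.Ioi t, (1 - F u)) * (θ t - θ s) := by
      have hcvt := ThetaAux.convPhi hpsiC hpsiM hpsiCv hFmono hFrange ht.le
      have hdifft : DifferentiableAt ℝ
          (fun x => ∫ u in (0:ℝ)..t, psiN (Real.log (Real.exp x * (1 - F u) + F u))) (θ t) := by
        apply differentiableAt_of_deriv_ne_zero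
        rw [hθt]
        exact (apos t ht).ne'
      have h := hcvt.slope_le_deriv (Set.mem_univ (θ s)) (Set.mem_univ (θ t)) hcon hdifft
      rw [hθt, slope_def_field, div_le_iff₀ hΔ] at h
      simpa using h
    have key2 : (1 - lam * ∫ u in Set.Ioi s, (1 - F u)) * (θ t - θ s)
        ≤ (∫ u in (0:ℝ)..s, psiN (Real.log (Real.exp (θ t) * (1 - F u) + F u)))
          - ∫ u in (0:ℝ)..s, psiN (Real.log (Real.exp (θ s) * (1 - F u) + F u)) := by
      have hcvs := ThetaAux.convPhi hpsiC hpsiM hpsiCv hFmono hFrange hs.le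
      have hdiffs : DifferentiableAt ℝ
          (fun x => ∫ u in (0:ℝ)..s, psiN (Real.log (Real.exp x * (1 - F u) + F u))) (θ s) := by
        apply differentiableAt_of_deriv_ne_zero
        rw [hθs]
        exact (apos s hs).ne'
      have h := hcvs.deriv_le_slope (Set.mem_univ (θ s)) (Set.mem_univ (θ t)) hcon hdiffs
      rw [hθs, slope_def_field, le_div_iff₀ hΔ] at h
      simpa [mul_comm] using h
    -- a_t vs a_s
    have hats : 1 - lam * (∫ u in Set.Ioi t, (1 - F u))
        ≤ (1 - lam * ∫ u in Set.Ioi s, (1 - F u))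
          + lam * ((∫ u in s..u', (1 - F u)) + ∫ u in u'..t, (1 - F u)) := by
      have hI12 : (∫ u in s..u', (1 - F u)) + (∫ u in u'..t, (1 - F u))
          = ∫ u in Set.Ioc s t, (1 - F u) := by
        rw [intervalIntegral.integral_add_adjacent_intervals (hIF s u') (hIF u' t),
          intervalIntegral.integral_of_le hlt.le]
      rw [hI12]
      have hIoc : IntegrableOn (fun u => 1 - F u) (Set.Ioc s t) volume := by
        have := hIF s t
        rwa [intervalIntegrable_iff, Set.uIoc_of_le hlt.le] at this
      by_cases hInt : IntegrableOn (fun u => 1 - F u) (Set.Ioi t) volume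
      · have heq : (∫ u in Set.Ioi s, (1 - F u))
            = (∫ u in Set.Ioc s t, (1 - F u)) + ∫ u in Set.Ioi t, (1 - F u) := by
          rw [← Set.Ioc_union_Ioi_eq_Ioi hlt.le]
          exact setIntegral_union (Set.Ioc_disjoint_Ioi le_rfl) measurableSet_Ioi hIoc hInt
        rw [heq]; ring_nf; linarith [le_refl (0:ℝ)]
      · have h2 : (∫ u in Set.Ioi t, (1 - F u)) = 0 := integral_undef hInt
        have hnotint : ¬ IntegrableOn (fun u => 1 - F u) (Set.Ioi s) volume :=
          fun hI => hInt (hI.mono_set (Set.Ioi_subset_Ioi hlt.le))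
        have h3 : (∫ u in Set.Ioi s, (1 - F u)) = 0 := integral_undef hnotint
        rw [h2, h3]
        have hnn : 0 ≤ ∫ u in Set.Ioc s t, (1 - F u) :=
          setIntegral_nonneg measurableSet_Ioc fun u _ => hFnn u
        nlinarith [mul_nonneg hlam.le hnn]
    -- final contradiction
    have hmul := mul_le_mul_of_nonneg_right hats hΔ.le
    linarith [key1, key2, hbound1, hbound2, hadj, hsub, hsplit_t, hsplit_s, hmul,
      mul_pos (mul_pos (sub_pos.mpr hlamM) hI₁pos) hΔ]
  · -- Case B : F ≡ 1 beyond s, equality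
    have hex' : ∀ u ∈ Set.Ioo s t, 1 ≤ F u :=
      fun u hu => le_of_not_gt fun h => hex ⟨u, hu, h⟩
    have hF1 : ∀ u, s < u → F u = 1 := by
      intro u hu
      refine le_antisymm (hFrange u).2 ?_
      rcases lt_or_ge u t with h | h
      · exact hex' u ⟨hu, h⟩
      · exact le_trans (hex' ((s + t) / 2) ⟨by linarith, by linarith⟩)
          (hFmono (by linarith))
    have hI0 : ∀ r, s ≤ r → (∫ u in Set.Ioi r, (1 - F u)) = 0 := by
      intro r hr
      rw [setIntegral_congr_fun measurableSet_Ioi (g := fun _ => (0:ℝ))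
        (fun u hu => by simp [hF1 u (lt_of_le_of_lt hr hu)])]
      simp
    have hC : (fun x : ℝ => ∫ u in (0:ℝ)..t, psiN (Real.log (Real.exp x * (1 - F u) + F u)))
        = fun x : ℝ => (∫ u in (0:ℝ)..s, psiN (Real.log (Real.exp x * (1 - F u) + F u)))
            + (t - s) * psiN 0 := by
      funext x
      rw [← intervalIntegral.integral_add_adjacent_intervals (hint x 0 s) (hint x s t)]
      congr 1
      rw [intervalIntegral.integral_congr_ae (g := fun _ => psiN 0) ?_]
      · rw [intervalIntegral.integral_const, smul_eq_mul]
      · refine ae_of_all _ fun u hu => ?_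
        rw [Set.uIoc_of_le hlt.le] at hu
        simp [hF1 u hu.1]
    rw [hC] at hθt
    rw [deriv_add_const] at hθt
    rw [hI0 t hlt.le] at hθt
    exact le_of_eq (huniq s hs (θ t) hθt_pos (by rw [hθt, hI0 s le_rfl]))
end

section
/- With \theta_t solving \psi_t'(\theta)=a_t, we have \theta_t \to \theta_\infty as t \to \infty, where \theta_\infty is the unique positive root of \psi_\infty'(\theta) = 1 and \psi_\infty(\theta) = \int_0^\infty \psi_N(\log(e^{\theta}\bar{F}(u)+F(u)))du. -/
open Filter MeasureTheory


private lemma phi_hasDeriv (psiN : ℝ → ℝ) (hd : Differentiable ℝ psiN) {c : ℝ}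
    (hc0 : 0 ≤ c) (hc1 : c ≤ 1) (x : ℝ) :
    HasDerivAt (fun x => psiN (Real.log (Real.exp x * (1 - c) + c)))
      (deriv psiN (Real.log (Real.exp x * (1 - c) + c)) *
        ((Real.exp x * (1 - c) + c)⁻¹ * (Real.exp x * (1 - c)))) x := by
  have hgpos : 0 < Real.exp x * (1 - c) + c := by
    rcases lt_or_eq_of_le hc1 with h | h
    · have : 0 < 1 - c := by linarith
      positivity
    · simp [h]
  have h1 : HasDerivAt (fun x => Real.exp x * (1 - c) + c) (Real.exp x * (1 - c)) x :=
    ((Real.hasDerivAt_exp x).mul_const _).add_const _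
  have h2 := (Real.hasDerivAt_log hgpos.ne').comp x h1
  exact ((hd _).hasDerivAt).comp x h2

private lemma g_pos {c : ℝ} (hc0 : 0 ≤ c) (hc1 : c ≤ 1) (x : ℝ) :
    0 < Real.exp x * (1 - c) + c := by
  rcases lt_or_eq_of_le hc1 with h | h
  · have : 0 < 1 - c := by linarith
    positivity
  · simp [h]

private lemma g_ge {c : ℝ} (hc0 : 0 ≤ c) (hc1 : c ≤ 1) (x : ℝ) :
    min 1 (Real.exp x) ≤ Real.exp x * (1 - c) + c := by
  rcases le_total (Real.exp x) 1 with h | h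
  · have := Real.exp_pos x
    calc min 1 (Real.exp x) = Real.exp x := min_eq_right h
    _ ≤ Real.exp x * (1 - c) + c := by nlinarith
  · calc min 1 (Real.exp x) = 1 := min_eq_left h
    _ ≤ Real.exp x * (1 - c) + c := by nlinarith

private lemma log_g_abs {c : ℝ} (hc0 : 0 ≤ c) (hc1 : c ≤ 1) (x : ℝ) :
    |Real.log (Real.exp x * (1 - c) + c)| ≤ |x| := by
  have hpos := g_pos hc0 hc1 x
  have hexp := Real.exp_pos x
  rcases le_total x 0 with h | h
  · have h1 : Real.exp x ≤ 1 := Real.exp_le_one_iff.mpr h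
    have hl : Real.exp x ≤ Real.exp x * (1 - c) + c := by nlinarith
    have hu : Real.exp x * (1 - c) + c ≤ 1 := by nlinarith
    have l1 : x ≤ Real.log (Real.exp x * (1 - c) + c) := by
      calc x = Real.log (Real.exp x) := (Real.log_exp x).symm
      _ ≤ _ := Real.log_le_log (by positivity) hl
    have l2 : Real.log (Real.exp x * (1 - c) + c) ≤ 0 := Real.log_nonpos hpos.le hu
    rw [abs_le]; constructor
    · calc -|x| = x := by rw [abs_of_nonpos h]; ring
      _ ≤ _ := l1
    · linarith [abs_nonneg x]
  · have h1 : 1 ≤ Real.exp x := Real.one_le_exp h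
    have hl : 1 ≤ Real.exp x * (1 - c) + c := by nlinarith
    have hu : Real.exp x * (1 - c) + c ≤ Real.exp x := by nlinarith
    have l1 : 0 ≤ Real.log (Real.exp x * (1 - c) + c) := Real.log_nonneg hl
    have l2 : Real.log (Real.exp x * (1 - c) + c) ≤ x := by
      calc Real.log (Real.exp x * (1 - c) + c) ≤ Real.log (Real.exp x) :=
        Real.log_le_log hpos hu
      _ = x := Real.log_exp x
    rw [abs_le]; constructor
    · linarith [abs_nonneg x]
    · calc Real.log (Real.exp x * (1 - c) + c) ≤ x := l2
      _ ≤ |x| := le_abs_self x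

private lemma ratio_nonneg {c : ℝ} (hc0 : 0 ≤ c) (hc1 : c ≤ 1) (x : ℝ) :
    0 ≤ (Real.exp x * (1 - c) + c)⁻¹ * (Real.exp x * (1 - c)) := by
  have := g_pos hc0 hc1 x
  have := Real.exp_pos x
  have : (0:ℝ) ≤ 1 - c := by linarith
  positivity

private lemma ratio_le_one {c : ℝ} (hc0 : 0 ≤ c) (hc1 : c ≤ 1) (x : ℝ) :
    (Real.exp x * (1 - c) + c)⁻¹ * (Real.exp x * (1 - c)) ≤ 1 := by
  have hpos := g_pos hc0 hc1 x
  rw [inv_mul_le_iff₀ hpos, mul_one]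
  linarith

private lemma ratio_mono {c : ℝ} (hc0 : 0 ≤ c) (hc1 : c ≤ 1) {x y : ℝ} (hxy : x ≤ y) :
    (Real.exp x * (1 - c) + c)⁻¹ * (Real.exp x * (1 - c)) ≤
      (Real.exp y * (1 - c) + c)⁻¹ * (Real.exp y * (1 - c)) := by
  have hx := g_pos hc0 hc1 x
  have hy := g_pos hc0 hc1 y
  rw [inv_mul_eq_div, inv_mul_eq_div, div_le_div_iff₀ hx hy]
  have he : Real.exp x ≤ Real.exp y := Real.exp_le_exp.mpr hxy
  have := Real.exp_pos x
  nlinarith [mul_nonneg (mul_nonneg (by linarith : (0:ℝ) ≤ 1 - c) hc0) (sub_nonneg.mpr he)]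

private lemma lemA (psiN F : ℝ → ℝ)
    (hd : Differentiable ℝ psiN) (hdc : Continuous (deriv psiN)) (hdm : Monotone (deriv psiN))
    (hFrange : ∀ u, 0 ≤ F u ∧ F u ≤ 1) (hFmeas : Measurable F)
    (hpsiInfFin : ∀ x : ℝ, IntegrableOn
      (fun u => psiN (Real.log (Real.exp x * (1 - F u) + F u))) (Set.Ioi 0))
    (hEVfin : IntegrableOn (fun u => 1 - F u) (Set.Ioi 0)) (x₀ : ℝ) :
    IntegrableOn (fun u => deriv psiN (Real.log (Real.exp x₀ * (1 - F u) + F u)) *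
        ((Real.exp x₀ * (1 - F u) + F u)⁻¹ * (Real.exp x₀ * (1 - F u)))) (Set.Ioi 0) ∧
      HasDerivAt (fun x : ℝ => ∫ u in Set.Ioi (0:ℝ),
          psiN (Real.log (Real.exp x * (1 - F u) + F u)))
        (∫ u in Set.Ioi (0:ℝ), deriv psiN (Real.log (Real.exp x₀ * (1 - F u) + F u)) *
          ((Real.exp x₀ * (1 - F u) + F u)⁻¹ * (Real.exp x₀ * (1 - F u)))) x₀ := by
  have hGmeas : ∀ x : ℝ, Measurable (fun u => Real.exp x * (1 - F u) + F u) := fun x =>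
    (measurable_const.mul (measurable_const.sub hFmeas)).add hFmeas
  have hΦmeas : ∀ x : ℝ, AEStronglyMeasurable
      (fun u => psiN (Real.log (Real.exp x * (1 - F u) + F u)))
      (volume.restrict (Set.Ioi 0)) := fun x =>
    ((hd.continuous.measurable).comp (Real.measurable_log.comp (hGmeas x))).aestronglyMeasurable
  have hΦ'meas : AEStronglyMeasurable
      (fun u => deriv psiN (Real.log (Real.exp x₀ * (1 - F u) + F u)) *
        ((Real.exp x₀ * (1 - F u) + F u)⁻¹ * (Real.exp x₀ * (1 - F u))))
      (volume.restrict (Set.Ioi 0)) :=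
    (((hdc.measurable).comp (Real.measurable_log.comp (hGmeas x₀))).mul
      (((hGmeas x₀).inv).mul (measurable_const.mul (measurable_const.sub hFmeas)))).aestronglyMeasurable
  set M : ℝ := |x₀| + 1 with hM
  set C : ℝ := max |deriv psiN (-M)| |deriv psiN M| with hC
  set K : ℝ := Real.exp (x₀ + 1) / min 1 (Real.exp (x₀ - 1)) with hK
  have hKpos : 0 < K := by
    apply div_pos (Real.exp_pos _)
    exact lt_min one_pos (Real.exp_pos _)
  have hCnn : 0 ≤ C := le_trans (abs_nonneg _) (le_max_left _ _)
  have h_bound : ∀ u : ℝ, ∀ x ∈ Metric.ball x₀ 1,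
      ‖deriv psiN (Real.log (Real.exp x * (1 - F u) + F u)) *
        ((Real.exp x * (1 - F u) + F u)⁻¹ * (Real.exp x * (1 - F u)))‖ ≤
        C * K * (1 - F u) := by
    intro u x hx
    obtain ⟨hc0, hc1⟩ := hFrange u
    rw [Metric.mem_ball, Real.dist_eq] at hx
    have hxb : |x| ≤ M := by
      rw [hM]; have := abs_sub_abs_le_abs_sub x x₀; linarith
    have hlog := (log_g_abs hc0 hc1 x).trans hxb
    rw [abs_le] at hlog
    have hp : |deriv psiN (Real.log (Real.exp x * (1 - F u) + F u))| ≤ C := by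
      rw [abs_le]; constructor
      · calc -C ≤ -|deriv psiN (-M)| := by
              simp only [neg_le_neg_iff]; exact le_max_left _ _
        _ ≤ deriv psiN (-M) := neg_abs_le _
        _ ≤ _ := hdm hlog.1
      · calc deriv psiN (Real.log (Real.exp x * (1 - F u) + F u)) ≤ deriv psiN M := hdm hlog.2
        _ ≤ |deriv psiN M| := le_abs_self _
        _ ≤ C := le_max_right _ _
    have hgpos := g_pos hc0 hc1 x
    have hge := g_ge hc0 hc1 x
    have hmin : min 1 (Real.exp (x₀ - 1)) ≤ min 1 (Real.exp x) :=
      min_le_min le_rfl (Real.exp_le_exp.mpr (by linarith [abs_lt.mp hx |>.1]))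
    have hminpos : (0:ℝ) < min 1 (Real.exp (x₀ - 1)) := lt_min one_pos (Real.exp_pos _)
    have hr : (Real.exp x * (1 - F u) + F u)⁻¹ * (Real.exp x * (1 - F u)) ≤ K * (1 - F u) := by
      rw [inv_mul_eq_div, div_le_iff₀ hgpos]
      have h1 : Real.exp x ≤ Real.exp (x₀ + 1) :=
        Real.exp_le_exp.mpr (by linarith [abs_lt.mp hx |>.2])
      have h2 : min 1 (Real.exp (x₀ - 1)) ≤ Real.exp x * (1 - F u) + F u :=
        hmin.trans hge
      rw [hK]
      have : Real.exp (x₀ + 1) / min 1 (Real.exp (x₀ - 1)) * (1 - F u) *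
          (Real.exp x * (1 - F u) + F u) ≥
          Real.exp (x₀ + 1) / min 1 (Real.exp (x₀ - 1)) * (1 - F u) *
          min 1 (Real.exp (x₀ - 1)) := by
        apply mul_le_mul_of_nonneg_left h2
        have : 0 ≤ 1 - F u := by linarith
        positivity
      have heq : Real.exp (x₀ + 1) / min 1 (Real.exp (x₀ - 1)) * (1 - F u) *
          min 1 (Real.exp (x₀ - 1)) = Real.exp (x₀ + 1) * (1 - F u) := by
        field_simp
      nlinarith [mul_le_mul_of_nonneg_right h1 (by linarith : (0:ℝ) ≤ 1 - F u)]
    have hrn := ratio_nonneg hc0 hc1 x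
    rw [Real.norm_eq_abs, abs_mul, abs_of_nonneg hrn]
    calc |deriv psiN (Real.log (Real.exp x * (1 - F u) + F u))| *
          ((Real.exp x * (1 - F u) + F u)⁻¹ * (Real.exp x * (1 - F u)))
        ≤ C * (K * (1 - F u)) := mul_le_mul hp hr hrn hCnn
      _ = C * K * (1 - F u) := by ring
  have h_diff : ∀ u : ℝ, ∀ x ∈ Metric.ball x₀ 1,
      HasDerivAt (fun x => psiN (Real.log (Real.exp x * (1 - F u) + F u)))
        (deriv psiN (Real.log (Real.exp x * (1 - F u) + F u)) *
          ((Real.exp x * (1 - F u) + F u)⁻¹ * (Real.exp x * (1 - F u)))) x := by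
    intro u x _
    exact phi_hasDeriv psiN hd (hFrange u).1 (hFrange u).2 x
  exact hasDerivAt_integral_of_dominated_loc_of_deriv_le
    (F' := fun x u => deriv psiN (Real.log (Real.exp x * (1 - F u) + F u)) *
      ((Real.exp x * (1 - F u) + F u)⁻¹ * (Real.exp x * (1 - F u))))
    (bound := fun u => C * K * (1 - F u)) (Metric.ball_mem_nhds x₀ one_pos)
    (Filter.Eventually.of_forall fun x => hΦmeas x) (hpsiInfFin x₀) hΦ'meas
    (Filter.Eventually.of_forall fun u => h_bound u) (hEVfin.const_mul (C * K))
    (Filter.Eventually.of_forall fun u => h_diff u)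

private lemma lemB (psiN F : ℝ → ℝ)
    (hd : Differentiable ℝ psiN) (hdc : Continuous (deriv psiN)) (hdm : Monotone (deriv psiN))
    (hmono : Monotone psiN)
    (hFrange : ∀ u, 0 ≤ F u ∧ F u ≤ 1) (hFmeas : Measurable F)
    {t : ℝ} (ht : 0 < t) (x₀ : ℝ) :
    IntervalIntegrable (fun u => deriv psiN (Real.log (Real.exp x₀ * (1 - F u) + F u)) *
        ((Real.exp x₀ * (1 - F u) + F u)⁻¹ * (Real.exp x₀ * (1 - F u)))) volume 0 t ∧
      HasDerivAt (fun x : ℝ => ∫ u in (0:ℝ)..t,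
          psiN (Real.log (Real.exp x * (1 - F u) + F u)))
        (∫ u in (0:ℝ)..t, deriv psiN (Real.log (Real.exp x₀ * (1 - F u) + F u)) *
          ((Real.exp x₀ * (1 - F u) + F u)⁻¹ * (Real.exp x₀ * (1 - F u)))) x₀ := by
  have hGmeas : ∀ x : ℝ, Measurable (fun u => Real.exp x * (1 - F u) + F u) := fun x =>
    (measurable_const.mul (measurable_const.sub hFmeas)).add hFmeas
  have hΦmeas : ∀ x : ℝ, AEStronglyMeasurable
      (fun u => psiN (Real.log (Real.exp x * (1 - F u) + F u)))
      (volume.restrict (Set.uIoc 0 t)) := fun x =>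
    ((hd.continuous.measurable).comp (Real.measurable_log.comp (hGmeas x))).aestronglyMeasurable
  have hΦ'meas : AEStronglyMeasurable
      (fun u => deriv psiN (Real.log (Real.exp x₀ * (1 - F u) + F u)) *
        ((Real.exp x₀ * (1 - F u) + F u)⁻¹ * (Real.exp x₀ * (1 - F u))))
      (volume.restrict (Set.uIoc 0 t)) :=
    (((hdc.measurable).comp (Real.measurable_log.comp (hGmeas x₀))).mul
      (((hGmeas x₀).inv).mul (measurable_const.mul (measurable_const.sub hFmeas)))).aestronglyMeasurable
  set M : ℝ := |x₀| + 1 with hM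
  set C : ℝ := max |deriv psiN (-M)| |deriv psiN M| with hC
  have hCnn : 0 ≤ C := le_trans (abs_nonneg _) (le_max_left _ _)
  -- integrability of Φ x₀ on the interval
  have hF_int : IntervalIntegrable
      (fun u => psiN (Real.log (Real.exp x₀ * (1 - F u) + F u))) volume 0 t := by
    rw [intervalIntegrable_iff]
    haveI : IsFiniteMeasure (volume.restrict (Set.uIoc 0 t)) := by
      constructor
      rw [Measure.restrict_apply_univ, Set.uIoc_of_le ht.le]
      exact measure_Ioc_lt_top
    apply Integrable.mono' (g := fun _ : ℝ => max |psiN (-M)| |psiN M|)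
      (integrable_const _) (hΦmeas x₀)
    apply Filter.Eventually.of_forall
    intro u
    obtain ⟨hc0, hc1⟩ := hFrange u
    have hlog := (log_g_abs hc0 hc1 x₀).trans (by linarith [abs_nonneg x₀] : |x₀| ≤ M)
    rw [abs_le] at hlog
    rw [Real.norm_eq_abs, abs_le]
    constructor
    · calc -max |psiN (-M)| |psiN M| ≤ -|psiN (-M)| := by
            simp only [neg_le_neg_iff]; exact le_max_left _ _
      _ ≤ psiN (-M) := neg_abs_le _
      _ ≤ _ := hmono hlog.1
    · calc psiN (Real.log (Real.exp x₀ * (1 - F u) + F u)) ≤ psiN M := hmono hlog.2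
      _ ≤ |psiN M| := le_abs_self _
      _ ≤ _ := le_max_right _ _
  have h_bound : ∀ u : ℝ, ∀ x ∈ Metric.ball x₀ 1,
      ‖deriv psiN (Real.log (Real.exp x * (1 - F u) + F u)) *
        ((Real.exp x * (1 - F u) + F u)⁻¹ * (Real.exp x * (1 - F u)))‖ ≤ C := by
    intro u x hx
    obtain ⟨hc0, hc1⟩ := hFrange u
    rw [Metric.mem_ball, Real.dist_eq] at hx
    have hxb : |x| ≤ M := by
      rw [hM]; have := abs_sub_abs_le_abs_sub x x₀; linarith
    have hlog := (log_g_abs hc0 hc1 x).trans hxb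
    rw [abs_le] at hlog
    have hp : |deriv psiN (Real.log (Real.exp x * (1 - F u) + F u))| ≤ C := by
      rw [abs_le]; constructor
      · calc -C ≤ -|deriv psiN (-M)| := by
              simp only [neg_le_neg_iff]; exact le_max_left _ _
        _ ≤ deriv psiN (-M) := neg_abs_le _
        _ ≤ _ := hdm hlog.1
      · calc deriv psiN (Real.log (Real.exp x * (1 - F u) + F u)) ≤ deriv psiN M := hdm hlog.2
        _ ≤ |deriv psiN M| := le_abs_self _
        _ ≤ C := le_max_right _ _
    have hrn := ratio_nonneg hc0 hc1 x
    have hr1 := ratio_le_one hc0 hc1 x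
    rw [Real.norm_eq_abs, abs_mul, abs_of_nonneg hrn]
    calc |deriv psiN (Real.log (Real.exp x * (1 - F u) + F u))| *
          ((Real.exp x * (1 - F u) + F u)⁻¹ * (Real.exp x * (1 - F u)))
        ≤ C * 1 := mul_le_mul hp hr1 hrn hCnn
      _ = C := mul_one C
  have h_diff : ∀ u : ℝ, ∀ x ∈ Metric.ball x₀ 1,
      HasDerivAt (fun x => psiN (Real.log (Real.exp x * (1 - F u) + F u)))
        (deriv psiN (Real.log (Real.exp x * (1 - F u) + F u)) *
          ((Real.exp x * (1 - F u) + F u)⁻¹ * (Real.exp x * (1 - F u)))) x := fun u x _ =>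
    phi_hasDeriv psiN hd (hFrange u).1 (hFrange u).2 x
  exact intervalIntegral.hasDerivAt_integral_of_dominated_loc_of_deriv_le
    (F' := fun x u => deriv psiN (Real.log (Real.exp x * (1 - F u) + F u)) *
      ((Real.exp x * (1 - F u) + F u)⁻¹ * (Real.exp x * (1 - F u))))
    (bound := fun _ => C) (Metric.ball_mem_nhds x₀ one_pos)
    (Filter.Eventually.of_forall fun x => hΦmeas x) hF_int hΦ'meas
    (Filter.Eventually.of_forall fun u _ => h_bound u) intervalIntegrable_const
    (Filter.Eventually.of_forall fun u _ => h_diff u)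

private lemma log_g_nonneg {c : ℝ} (hc0 : 0 ≤ c) (hc1 : c ≤ 1) {x : ℝ} (hx : 0 ≤ x) :
    0 ≤ Real.log (Real.exp x * (1 - c) + c) := by
  apply Real.log_nonneg
  have h1 : 1 ≤ Real.exp x := Real.one_le_exp hx
  nlinarith

private lemma phi'_nonneg (psiN : ℝ → ℝ) (hdm : Monotone (deriv psiN)) {lam : ℝ}
    (hd0 : deriv psiN 0 = lam) (hlam : 0 < lam)
    {c : ℝ} (hc0 : 0 ≤ c) (hc1 : c ≤ 1) {x : ℝ} (hx : 0 ≤ x) :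
    0 ≤ deriv psiN (Real.log (Real.exp x * (1 - c) + c)) *
      ((Real.exp x * (1 - c) + c)⁻¹ * (Real.exp x * (1 - c))) := by
  have hp : lam ≤ deriv psiN (Real.log (Real.exp x * (1 - c) + c)) := by
    rw [← hd0]; exact hdm (log_g_nonneg hc0 hc1 hx)
  exact mul_nonneg (by linarith) (ratio_nonneg hc0 hc1 x)

private lemma phi'_mono (psiN : ℝ → ℝ) (hdm : Monotone (deriv psiN)) {lam : ℝ}
    (hd0 : deriv psiN 0 = lam) (hlam : 0 < lam)
    {c : ℝ} (hc0 : 0 ≤ c) (hc1 : c ≤ 1) {x y : ℝ} (hx : 0 ≤ x) (hxy : x ≤ y) :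
    deriv psiN (Real.log (Real.exp x * (1 - c) + c)) *
      ((Real.exp x * (1 - c) + c)⁻¹ * (Real.exp x * (1 - c))) ≤
    deriv psiN (Real.log (Real.exp y * (1 - c) + c)) *
      ((Real.exp y * (1 - c) + c)⁻¹ * (Real.exp y * (1 - c))) := by
  have hlog : Real.log (Real.exp x * (1 - c) + c) ≤ Real.log (Real.exp y * (1 - c) + c) := by
    apply Real.log_le_log (g_pos hc0 hc1 x)
    have := Real.exp_le_exp.mpr hxy
    nlinarith
  have hp : deriv psiN (Real.log (Real.exp x * (1 - c) + c)) ≤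
      deriv psiN (Real.log (Real.exp y * (1 - c) + c)) := hdm hlog
  have hpy : 0 ≤ deriv psiN (Real.log (Real.exp y * (1 - c) + c)) := by
    have : lam ≤ deriv psiN (Real.log (Real.exp y * (1 - c) + c)) := by
      rw [← hd0]; exact hdm (log_g_nonneg hc0 hc1 (hx.trans hxy))
    linarith
  calc deriv psiN (Real.log (Real.exp x * (1 - c) + c)) *
        ((Real.exp x * (1 - c) + c)⁻¹ * (Real.exp x * (1 - c)))
      ≤ deriv psiN (Real.log (Real.exp y * (1 - c) + c)) *
        ((Real.exp x * (1 - c) + c)⁻¹ * (Real.exp x * (1 - c))) :=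
        mul_le_mul_of_nonneg_right hp (ratio_nonneg hc0 hc1 x)
    _ ≤ _ := mul_le_mul_of_nonneg_left (ratio_mono hc0 hc1 hxy) hpy


/-- The tilting parameter `θ_t` tends to `θ_∞` as `t → ∞`, where `θ_∞` is the unique
positive root of `ψ_∞'(θ) = 1` with `ψ_∞(θ) = ∫_0^∞ ψ_N(log(e^θ F̄(u)+F(u)))du`. -/
theorem theta_t_tendsto_theta_infty
    (psiN F : ℝ → ℝ) (lam EV thetaInf : ℝ)
    (hC2 : ContDiff ℝ 2 psiN)
    (hmono : StrictMono psiN)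
    (hconv : StrictConvexOn ℝ Set.univ psiN)
    (hsteep : Tendsto (deriv psiN) atTop atTop)
    (hd0 : deriv psiN 0 = lam) (hlam : 0 < lam)
    (hFrange : ∀ u, 0 ≤ F u ∧ F u ≤ 1) (hFmono : Monotone F)
    (hEV : EV = ∫ u in Set.Ioi (0:ℝ), (1 - F u)) (hrho : lam * EV < 1)
    (hEVfin : IntegrableOn (fun u => 1 - F u) (Set.Ioi 0))
    (hpsiInfFin : ∀ x : ℝ, IntegrableOn
      (fun u => psiN (Real.log (Real.exp x * (1 - F u) + F u))) (Set.Ioi 0))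
    (hpsiInfSteep : Tendsto (deriv (fun x : ℝ => ∫ u in Set.Ioi (0:ℝ),
        psiN (Real.log (Real.exp x * (1 - F u) + F u)))) atTop atTop)
    (hthetaInf : 0 < thetaInf ∧
      deriv (fun x : ℝ => ∫ u in Set.Ioi (0:ℝ),
          psiN (Real.log (Real.exp x * (1 - F u) + F u))) thetaInf = 1)
    (hthetaInfUniq : ∀ x > (0:ℝ),
      deriv (fun x : ℝ => ∫ u in Set.Ioi (0:ℝ),
          psiN (Real.log (Real.exp x * (1 - F u) + F u))) x = 1 → x = thetaInf)
    (θ : ℝ → ℝ)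
    (hθ : ∀ t > (0:ℝ), 0 < θ t ∧
      deriv (fun x : ℝ => ∫ u in (0:ℝ)..t,
          psiN (Real.log (Real.exp x * (1 - F u) + F u))) (θ t)
        = 1 - lam * ∫ u in Set.Ioi t, (1 - F u)) :
    Tendsto θ atTop (nhds thetaInf) := by
  obtain ⟨hTpos, hTeq⟩ := hthetaInf
  have hd : Differentiable ℝ psiN := hC2.differentiable (by norm_num)
  have hdc : Continuous (deriv psiN) := hC2.continuous_deriv (by norm_num)
  have hdm : Monotone (deriv psiN) :=
    monotoneOn_univ.mp (hconv.convexOn.monotoneOn_deriv (fun x _ => hd x))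
  have hFmeas : Measurable F := hFmono.measurable
  have A := fun x₀ => lemA psiN F hd hdc hdm hFrange hFmeas hpsiInfFin hEVfin x₀
  have B := fun {t : ℝ} (ht : 0 < t) x₀ =>
    lemB psiN F hd hdc hdm hmono.monotone hFrange hFmeas ht x₀
  set D : ℝ → ℝ := fun x => ∫ u in Set.Ioi (0:ℝ),
    deriv psiN (Real.log (Real.exp x * (1 - F u) + F u)) *
      ((Real.exp x * (1 - F u) + F u)⁻¹ * (Real.exp x * (1 - F u))) with hDdef
  set Dt : ℝ → ℝ → ℝ := fun t x => ∫ u in (0:ℝ)..t,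
    deriv psiN (Real.log (Real.exp x * (1 - F u) + F u)) *
      ((Real.exp x * (1 - F u) + F u)⁻¹ * (Real.exp x * (1 - F u))) with hDtdef
  have hD1 : D thetaInf = 1 := ((A thetaInf).2.deriv).symm.trans hTeq
  have hDmono : ∀ x y : ℝ, 0 ≤ x → x ≤ y → D x ≤ D y := fun x y hx hxy =>
    setIntegral_mono_on (A x).1 (A y).1 measurableSet_Ioi
      (fun u _ => phi'_mono psiN hdm hd0 hlam (hFrange u).1 (hFrange u).2 hx hxy)
  -- tail behaviour
  have htail_nonneg : ∀ t : ℝ, 0 ≤ ∫ u in Set.Ioi t, (1 - F u) := fun t =>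
    setIntegral_nonneg measurableSet_Ioi fun u _ => by linarith [(hFrange u).2]
  have htail0 : Tendsto (fun t => ∫ u in Set.Ioi t, (1 - F u)) atTop (nhds 0) := by
    have h1 : Tendsto (fun t => ∫ u in (0:ℝ)..t, (1 - F u)) atTop
        (nhds (∫ u in Set.Ioi (0:ℝ), (1 - F u))) :=
      intervalIntegral_tendsto_integral_Ioi 0 hEVfin tendsto_id
    have h2 : Tendsto (fun t => (∫ u in Set.Ioi (0:ℝ), (1 - F u)) -
        ∫ u in (0:ℝ)..t, (1 - F u)) atTop (nhds 0) := by
      have := tendsto_const_nhds (x := ∫ u in Set.Ioi (0:ℝ), (1 - F u)) (f := atTop (α := ℝ))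
      simpa using this.sub h1
    apply h2.congr'
    filter_upwards [eventually_ge_atTop (0:ℝ)] with t ht
    have hsplit : ∫ u in Set.Ioi (0:ℝ), (1 - F u) =
        (∫ u in Set.Ioc 0 t, (1 - F u)) + ∫ u in Set.Ioi t, (1 - F u) := by
      rw [← Set.Ioc_union_Ioi_eq_Ioi ht, setIntegral_union Set.Ioc_disjoint_Ioi_same
        measurableSet_Ioi (hEVfin.mono_set Set.Ioc_subset_Ioi_self)
        (hEVfin.mono_set (Set.Ioi_subset_Ioi ht))]
    rw [intervalIntegral.integral_of_le ht, hsplit]; ring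
  have hat : Tendsto (fun t => 1 - lam * ∫ u in Set.Ioi t, (1 - F u)) atTop (nhds 1) := by
    have := (tendsto_const_nhds (x := (1:ℝ)) (f := atTop (α := ℝ))).sub
      ((tendsto_const_nhds (x := lam) (f := atTop (α := ℝ))).mul htail0)
    simpa using this
  have hat_le : ∀ t : ℝ, 1 - lam * (∫ u in Set.Ioi t, (1 - F u)) ≤ 1 := fun t => by
    nlinarith [htail_nonneg t]
  -- Dt facts
  have hDt_tendsto : ∀ x : ℝ, Tendsto (fun t => Dt t x) atTop (nhds (D x)) := fun x =>
    intervalIntegral_tendsto_integral_Ioi 0 (A x).1 tendsto_id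
  have hDt_le : ∀ x : ℝ, 0 ≤ x → ∀ t : ℝ, 0 < t → Dt t x ≤ D x := by
    intro x hx t ht
    have h2 : (∫ u in Set.Ioc (0:ℝ) t,
        deriv psiN (Real.log (Real.exp x * (1 - F u) + F u)) *
          ((Real.exp x * (1 - F u) + F u)⁻¹ * (Real.exp x * (1 - F u)))) ≤ D x := by
      apply setIntegral_mono_set (A x).1
      · exact Filter.Eventually.of_forall fun u =>
          phi'_nonneg psiN hdm hd0 hlam (hFrange u).1 (hFrange u).2 hx
      · exact Filter.Eventually.of_forall fun u hu => Set.Ioc_subset_Ioi_self hu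
    calc Dt t x = ∫ u in Set.Ioc (0:ℝ) t,
        deriv psiN (Real.log (Real.exp x * (1 - F u) + F u)) *
          ((Real.exp x * (1 - F u) + F u)⁻¹ * (Real.exp x * (1 - F u))) :=
        intervalIntegral.integral_of_le ht.le
      _ ≤ D x := h2
  have hDt_mono : ∀ t : ℝ, 0 < t → ∀ x y : ℝ, 0 ≤ x → x ≤ y → Dt t x ≤ Dt t y := by
    intro t ht x y hx hxy
    exact intervalIntegral.integral_mono_on ht.le (B ht x).1 (B ht y).1
      (fun u _ => phi'_mono psiN hdm hd0 hlam (hFrange u).1 (hFrange u).2 hx hxy)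
  -- the key equation for θ t
  have hθeq : ∀ t : ℝ, 0 < t → Dt t (θ t) = 1 - lam * ∫ u in Set.Ioi t, (1 - F u) := by
    intro t ht
    exact ((B ht (θ t)).2.deriv).symm.trans (hθ t ht).2
  rw [tendsto_order]
  constructor
  · intro b hb
    set xm : ℝ := max b (thetaInf / 2) with hxm
    have hxmpos : 0 < xm := lt_max_of_lt_right (by linarith)
    have hxmlt : xm < thetaInf := max_lt hb (by linarith)
    have hs : D xm < 1 := by
      rcases lt_or_eq_of_le (hDmono xm thetaInf hxmpos.le hxmlt.le) with h | h
      · rwa [hD1] at h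
      · exfalso
        have hde : deriv (fun x : ℝ => ∫ u in Set.Ioi (0:ℝ),
            psiN (Real.log (Real.exp x * (1 - F u) + F u))) xm = 1 :=
          (A xm).2.deriv.trans (h.trans hD1)
        exact absurd (hthetaInfUniq xm hxmpos hde) hxmlt.ne
    filter_upwards [eventually_gt_atTop (0:ℝ), hat.eventually (eventually_gt_nhds hs)]
      with t ht hats
    by_contra hcon
    push_neg at hcon
    have hθx : θ t ≤ xm := hcon.trans (le_max_left _ _)
    have : Dt t (θ t) ≤ D xm :=
      (hDt_mono t ht (θ t) xm (hθ t ht).1.le hθx).trans (hDt_le xm hxmpos.le t ht)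
    rw [hθeq t ht] at this
    linarith
  · intro b hb
    set xp : ℝ := min b (thetaInf + 1) with hxp
    have hxpgt : thetaInf < xp := lt_min hb (by linarith)
    have hxppos : 0 < xp := hTpos.trans hxpgt
    have hs : 1 < D xp := by
      rcases lt_or_eq_of_le (hDmono thetaInf xp hTpos.le hxpgt.le) with h | h
      · rwa [hD1] at h
      · exfalso
        have hde : deriv (fun x : ℝ => ∫ u in Set.Ioi (0:ℝ),
            psiN (Real.log (Real.exp x * (1 - F u) + F u))) xp = 1 :=
          (A xp).2.deriv.trans (h.symm.trans hD1)
        exact absurd (hthetaInfUniq xp hxppos hde) hxpgt.ne'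
    filter_upwards [eventually_gt_atTop (0:ℝ),
      (hDt_tendsto xp).eventually (eventually_gt_nhds hs)] with t ht hdts
    by_contra hcon
    push_neg at hcon
    have hθx : xp ≤ θ t := (min_le_left _ _).trans hcon
    have : Dt t xp ≤ Dt t (θ t) := hDt_mono t ht xp (θ t) hxppos.le hθx
    rw [hθeq t ht] at this
    linarith [hat_le t]
end

section
/- Define I_t = \theta_t a_t - \psi_t(\theta_t), where \theta_t solves \psi_t'(\theta_t) = a_t. Then t \mapsto I_t is non-increasing on (0,\infty). In particular, d/dt I_t = \theta_t \lambda \bar{F}(t) - \psi_N(\log(e^{\theta_t}\bar{F}(t)+F(t))) \le 0, because convexity of \theta \mapsto \psi_N(\log(e^{\theta}\bar{F}(t)+F(t))) gives \psi_N(\log(e^{\theta}\bar{F}(t)+F(t))) \ge \psi_N(0) + \lambda\bar{F}(t)\theta = \lambda\bar{F}(t)\theta for all \theta \ge 0. -/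
open Filter MeasureTheory

section RateAux
open Set

private lemma aux_pos {b c : ℝ} (hb : 0 ≤ b) (hc : 0 ≤ c) (hbc : b + c = 1) (x : ℝ) :
    0 < Real.exp x * b + c := by
  rcases eq_or_lt_of_le hb with h | h
  · have : c = 1 := by linarith
    simp [← h, this]
  · have := Real.exp_pos x
    nlinarith

private lemma aux_hasDerivAt {psiN : ℝ → ℝ} (hψ : Differentiable ℝ psiN)
    {b c : ℝ} (hb : 0 ≤ b) (hc : 0 ≤ c) (hbc : b + c = 1) (x : ℝ) :
    HasDerivAt (fun y => psiN (Real.log (Real.exp y * b + c)))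
      (deriv psiN (Real.log (Real.exp x * b + c)) *
        (Real.exp x * b / (Real.exp x * b + c))) x := by
  have h1 : HasDerivAt (fun y : ℝ => Real.exp y * b + c) (Real.exp x * b) x :=
    ((Real.hasDerivAt_exp x).mul_const b).add_const c
  have h2 : HasDerivAt (fun y => Real.log (Real.exp y * b + c))
      (Real.exp x * b / (Real.exp x * b + c)) x := by
    have := (Real.hasDerivAt_log (aux_pos hb hc hbc x).ne').comp x h1
    simpa [Function.comp_def, div_eq_inv_mul] using this
  have h3 : HasDerivAt psiN (deriv psiN (Real.log (Real.exp x * b + c)))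
      (Real.log (Real.exp x * b + c)) := (hψ _).hasDerivAt
  simpa [Function.comp_def] using h3.comp x h2

private lemma aux_log_bounds {b c : ℝ} (hb : 0 ≤ b) (hc : 0 ≤ c) (hbc : b + c = 1)
    {x : ℝ} (hx : 0 ≤ x) :
    0 ≤ Real.log (Real.exp x * b + c) ∧ Real.log (Real.exp x * b + c) ≤ x := by
  have hpos := aux_pos hb hc hbc x
  have hex : 1 ≤ Real.exp x := Real.one_le_exp hx
  constructor
  · apply Real.log_nonneg; nlinarith
  · rw [Real.log_le_iff_le_exp hpos]; nlinarith

private lemma aux_deriv_lb {psiN : ℝ → ℝ} {lam : ℝ}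
    (hmono' : Monotone (deriv psiN)) (hd0 : deriv psiN 0 = lam) (hlam : 0 < lam)
    {b c : ℝ} (hb : 0 ≤ b) (hc : 0 ≤ c) (hbc : b + c = 1) {x : ℝ} (hx : 0 ≤ x) :
    lam * b ≤ deriv psiN (Real.log (Real.exp x * b + c)) *
      (Real.exp x * b / (Real.exp x * b + c)) := by
  have hpos := aux_pos hb hc hbc x
  have hex : 1 ≤ Real.exp x := Real.one_le_exp hx
  have hm := aux_log_bounds hb hc hbc hx
  have hp : lam ≤ deriv psiN (Real.log (Real.exp x * b + c)) := by
    rw [← hd0]; exact hmono' hm.1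
  have hq : b ≤ Real.exp x * b / (Real.exp x * b + c) := by
    rw [le_div_iff₀ hpos]
    nlinarith [mul_nonneg (mul_nonneg (sub_nonneg.2 hex) hb) hc]
  calc lam * b ≤ lam * (Real.exp x * b / (Real.exp x * b + c)) := by
        exact mul_le_mul_of_nonneg_left hq hlam.le
    _ ≤ _ := mul_le_mul_of_nonneg_right hp (by positivity)

private lemma aux_deriv_mono {psiN : ℝ → ℝ} {lam : ℝ}
    (hmono' : Monotone (deriv psiN)) (hd0 : deriv psiN 0 = lam) (hlam : 0 < lam)
    {b c : ℝ} (hb : 0 ≤ b) (hc : 0 ≤ c) (hbc : b + c = 1) {x y : ℝ}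
    (hx : 0 ≤ x) (hxy : x ≤ y) :
    deriv psiN (Real.log (Real.exp x * b + c)) * (Real.exp x * b / (Real.exp x * b + c)) ≤
      deriv psiN (Real.log (Real.exp y * b + c)) * (Real.exp y * b / (Real.exp y * b + c)) := by
  have hy : 0 ≤ y := hx.trans hxy
  have hposx := aux_pos hb hc hbc x
  have hposy := aux_pos hb hc hbc y
  have hee : Real.exp x ≤ Real.exp y := Real.exp_le_exp.2 hxy
  have hmxy : Real.log (Real.exp x * b + c) ≤ Real.log (Real.exp y * b + c) := by
    apply Real.log_le_log hposx; nlinarith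
  have hp : deriv psiN (Real.log (Real.exp x * b + c)) ≤
      deriv psiN (Real.log (Real.exp y * b + c)) := hmono' hmxy
  have hq : Real.exp x * b / (Real.exp x * b + c) ≤ Real.exp y * b / (Real.exp y * b + c) := by
    rw [div_le_div_iff₀ hposx hposy]
    nlinarith [mul_nonneg (mul_nonneg (sub_nonneg.2 hee) hb) hc]
  have hpy : 0 ≤ deriv psiN (Real.log (Real.exp y * b + c)) := by
    have := aux_log_bounds hb hc hbc hy
    have : lam ≤ deriv psiN (Real.log (Real.exp y * b + c)) := by
      rw [← hd0]; exact hmono' this.1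
    linarith
  have hqx : 0 ≤ Real.exp x * b / (Real.exp x * b + c) := by positivity
  exact mul_le_mul hp hq hqx hpy

private lemma aux_deriv_ub {psiN : ℝ → ℝ} {lam : ℝ}
    (hmono' : Monotone (deriv psiN)) (hd0 : deriv psiN 0 = lam) (hlam : 0 < lam)
    {b c : ℝ} (hb : 0 ≤ b) (hc : 0 ≤ c) (hbc : b + c = 1) {x M : ℝ}
    (hx : 0 ≤ x) (hxM : x ≤ M) :
    |deriv psiN (Real.log (Real.exp x * b + c)) * (Real.exp x * b / (Real.exp x * b + c))| ≤
      deriv psiN M := by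
  have hpos := aux_pos hb hc hbc x
  have hm := aux_log_bounds hb hc hbc hx
  have hplb : lam ≤ deriv psiN (Real.log (Real.exp x * b + c)) := by
    rw [← hd0]; exact hmono' hm.1
  have hpub : deriv psiN (Real.log (Real.exp x * b + c)) ≤ deriv psiN M :=
    hmono' (hm.2.trans hxM)
  have hq0 : 0 ≤ Real.exp x * b / (Real.exp x * b + c) := by positivity
  have hq1 : Real.exp x * b / (Real.exp x * b + c) ≤ 1 := by
    rw [div_le_one hpos]; linarith
  rw [abs_of_nonneg (by nlinarith)]
  nlinarith

private lemma aux_G_lb {psiN : ℝ → ℝ} {lam : ℝ} (hψ : Differentiable ℝ psiN)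
    (hmono' : Monotone (deriv psiN)) (hd0 : deriv psiN 0 = lam) (hlam : 0 < lam)
    (hpsiN0 : psiN 0 = 0)
    {b c : ℝ} (hb : 0 ≤ b) (hc : 0 ≤ c) (hbc : b + c = 1) {x : ℝ} (hx : 0 ≤ x) :
    lam * b * x ≤ psiN (Real.log (Real.exp x * b + c)) := by
  set g : ℝ → ℝ := fun y => psiN (Real.log (Real.exp y * b + c)) - lam * b * y with hg
  have hder : ∀ y : ℝ, HasDerivAt g
      (deriv psiN (Real.log (Real.exp y * b + c)) *
        (Real.exp y * b / (Real.exp y * b + c)) - lam * b) y := by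
    intro y
    exact (aux_hasDerivAt hψ hb hc hbc y).sub
      (by simpa using (hasDerivAt_id y).const_mul (lam * b))
  have hmon : MonotoneOn g (Icc 0 x) := by
    apply monotoneOn_of_deriv_nonneg (convex_Icc 0 x)
    · exact fun y _ => (hder y).differentiableAt.continuousAt.continuousWithinAt
    · exact fun y _ => ((hder y).differentiableAt).differentiableWithinAt
    · intro y hy
      rw [interior_Icc] at hy
      rw [(hder y).deriv]
      have := aux_deriv_lb hmono' hd0 hlam hb hc hbc hy.1.le
      linarith
  have h0 : g 0 = 0 := by simp [hg, Real.exp_zero, hbc, hpsiN0]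
  have := hmon (left_mem_Icc.2 hx) (right_mem_Icc.2 hx) hx
  rw [h0] at this
  simp only [hg] at this
  linarith

section Main
variable {psiN F : ℝ → ℝ} {lam : ℝ}

private lemma aux_pos' (hFrange : ∀ u, 0 ≤ F u ∧ F u ≤ 1) (x u : ℝ) :
    0 < Real.exp x * (1 - F u) + F u := by
  have h := hFrange u
  have := Real.exp_pos x
  rcases eq_or_lt_of_le h.2 with hh | hh
  · simp only [hh]; norm_num
  · nlinarith

private lemma aux_contG (hψc : Continuous psiN) (hFc : Continuous F)
    (hFrange : ∀ u, 0 ≤ F u ∧ F u ≤ 1) (x : ℝ) :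
    Continuous fun u => psiN (Real.log (Real.exp x * (1 - F u) + F u)) := by
  have hin : Continuous fun u => Real.exp x * (1 - F u) + F u := by fun_prop
  exact hψc.comp (hin.log fun u => (aux_pos' hFrange x u).ne')

private lemma aux_contG' (hψc : Continuous (deriv psiN)) (hFc : Continuous F)
    (hFrange : ∀ u, 0 ≤ F u ∧ F u ≤ 1) (x : ℝ) :
    Continuous fun u => deriv psiN (Real.log (Real.exp x * (1 - F u) + F u)) *
      (Real.exp x * (1 - F u) / (Real.exp x * (1 - F u) + F u)) := by
  have hin : Continuous fun u => Real.exp x * (1 - F u) + F u := by fun_prop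
  have hlog : Continuous fun u => Real.log (Real.exp x * (1 - F u) + F u) :=
    hin.log fun u => (aux_pos' hFrange x u).ne'
  exact (hψc.comp hlog).mul
    ((by fun_prop : Continuous fun u => Real.exp x * (1 - F u)).div hin
      fun u => (aux_pos' hFrange x u).ne')

private lemma aux_int_deriv (hψ : Differentiable ℝ psiN) (hψ'c : Continuous (deriv psiN))
    (hmono' : Monotone (deriv psiN)) (hd0 : deriv psiN 0 = lam) (hlam : 0 < lam)
    (hFrange : ∀ u, 0 ≤ F u ∧ F u ≤ 1) (hFc : Continuous F) (s : ℝ) {x₀ : ℝ} (hx₀ : 0 < x₀) :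
    HasDerivAt (fun y => ∫ u in (0:ℝ)..s, psiN (Real.log (Real.exp y * (1 - F u) + F u)))
      (∫ u in (0:ℝ)..s, deriv psiN (Real.log (Real.exp x₀ * (1 - F u) + F u)) *
        (Real.exp x₀ * (1 - F u) / (Real.exp x₀ * (1 - F u) + F u))) x₀ := by
  have hball : ∀ x ∈ Metric.ball x₀ (x₀/2), 0 < x ∧ x ≤ 2*x₀ := by
    intro x hx
    rw [Metric.mem_ball, Real.dist_eq, abs_lt] at hx
    constructor <;> linarith
  refine (intervalIntegral.hasDerivAt_integral_of_dominated_loc_of_deriv_le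
    (F' := fun x u => deriv psiN (Real.log (Real.exp x * (1 - F u) + F u)) *
      (Real.exp x * (1 - F u) / (Real.exp x * (1 - F u) + F u)))
    (bound := fun _ => deriv psiN (2*x₀)) (Metric.ball_mem_nhds x₀ (half_pos hx₀)) ?_ ?_ ?_ ?_ ?_ ?_).2
  · exact Eventually.of_forall fun x =>
      (aux_contG hψ.continuous hFc hFrange x).aestronglyMeasurable
  · exact (aux_contG hψ.continuous hFc hFrange x₀).intervalIntegrable _ _
  · exact (aux_contG' hψ'c hFc hFrange x₀).aestronglyMeasurable
  · refine Eventually.of_forall fun u _ x hx => ?_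
    have h1 := hball x hx
    rw [Real.norm_eq_abs]
    exact aux_deriv_ub hmono' hd0 hlam (by linarith [(hFrange u).2]) (hFrange u).1
      (by ring) h1.1.le h1.2
  · exact intervalIntegrable_const
  · refine Eventually.of_forall fun u _ x hx => ?_
    exact aux_hasDerivAt hψ (by linarith [(hFrange u).2]) (hFrange u).1 (by ring) x

end Main


end RateAux

/-- The rate function `I_t = θ_t a_t - ψ_t(θ_t)` is non-increasing in `t` on `(0,∞)`. -/
theorem rate_function_antitone
    (psiN F f : ℝ → ℝ) (lam EV : ℝ)
    (hC2 : ContDiff ℝ 2 psiN)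
    (hmono : StrictMono psiN)
    (hconv : StrictConvexOn ℝ Set.univ psiN)
    (hsteep : Tendsto (deriv psiN) atTop atTop)
    (hpsiN0 : psiN 0 = 0)
    (hd0 : deriv psiN 0 = lam) (hlam : 0 < lam)
    (hFrange : ∀ u, 0 ≤ F u ∧ F u ≤ 1) (hFmono : Monotone F)
    (hdens : ∀ u, HasDerivAt F (f u) u)
    (hEV : EV = ∫ u in Set.Ioi (0:ℝ), (1 - F u)) (hrho : lam * EV < 1)
    (θ : ℝ → ℝ)
    (hθ : ∀ t > (0:ℝ), 0 < θ t ∧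
      deriv (fun x : ℝ => ∫ u in (0:ℝ)..t,
          psiN (Real.log (Real.exp x * (1 - F u) + F u))) (θ t)
        = 1 - lam * ∫ u in Set.Ioi t, (1 - F u))
    (hθdiff : ∀ t > (0:ℝ), DifferentiableAt ℝ θ t)
    (I : ℝ → ℝ)
    (hI : ∀ t, I t = θ t * (1 - lam * ∫ u in Set.Ioi t, (1 - F u))
        - ∫ u in (0:ℝ)..t, psiN (Real.log (Real.exp (θ t) * (1 - F u) + F u))) :
    AntitoneOn I (Set.Ioi 0) := by
  intro s hs t ht hst
  simp only [Set.mem_Ioi] at hs ht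
  have hψ : Differentiable ℝ psiN := hC2.differentiable (by norm_num)
  have hψ'c : Continuous (deriv psiN) := hC2.continuous_deriv (by norm_num)
  have hmono' : Monotone (deriv psiN) :=
    monotoneOn_univ.mp (hconv.convexOn.monotoneOn_deriv fun x _ => hψ x)
  have hFc : Continuous F :=
    continuous_iff_continuousAt.2 fun u => (hdens u).differentiableAt.continuousAt
  obtain ⟨hθs, hθseq⟩ := hθ s hs
  obtain ⟨hθt, hθteq⟩ := hθ t ht
  set As : ℝ := 1 - lam * ∫ u in Set.Ioi s, (1 - F u) with hAs
  set At : ℝ := 1 - lam * ∫ u in Set.Ioi t, (1 - F u) with hAt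
  set D : ℝ → ℝ := fun z => ∫ u in (0:ℝ)..s,
      deriv psiN (Real.log (Real.exp z * (1 - F u) + F u)) *
        (Real.exp z * (1 - F u) / (Real.exp z * (1 - F u) + F u)) with hD
  have hderivΦ : ∀ z : ℝ, 0 < z → HasDerivAt
      (fun y => ∫ u in (0:ℝ)..s, psiN (Real.log (Real.exp y * (1 - F u) + F u))) (D z) z :=
    fun z hz => aux_int_deriv hψ hψ'c hmono' hd0 hlam hFrange hFc s hz
  have hDsAs : D (θ s) = As := by
    rw [← (hderivΦ (θ s) hθs).deriv]; exact hθseq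
  have hDmono : ∀ z w : ℝ, 0 < z → z ≤ w → D z ≤ D w := by
    intro z w hz hzw
    refine intervalIntegral.integral_mono_on hs.le
      ((aux_contG' hψ'c hFc hFrange z).intervalIntegrable _ _)
      ((aux_contG' hψ'c hFc hFrange w).intervalIntegrable _ _) fun u _ => ?_
    exact aux_deriv_mono hmono' hd0 hlam (by linarith [(hFrange u).2]) (hFrange u).1
      (by ring) hz.le hzw
  have hHD : ∀ z : ℝ, 0 < z → HasDerivAt
      (fun y => (∫ u in (0:ℝ)..s, psiN (Real.log (Real.exp y * (1 - F u) + F u))) - As * y)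
      (D z - As) z := by
    intro z hz
    exact (hderivΦ z hz).sub (by simpa using (hasDerivAt_id z).const_mul As)
  have claim2 : (∫ u in (0:ℝ)..s, psiN (Real.log (Real.exp (θ s) * (1 - F u) + F u)))
      - As * θ s ≤
      (∫ u in (0:ℝ)..s, psiN (Real.log (Real.exp (θ t) * (1 - F u) + F u))) - As * θ t := by
    rcases le_total (θ s) (θ t) with hcase | hcase
    · have hmon := monotoneOn_of_deriv_nonneg (convex_Icc (θ s) (θ t))
        (f := fun y => (∫ u in (0:ℝ)..s, psiN (Real.log (Real.exp y * (1 - F u) + F u))) - As * y)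
        (fun z hz => (hHD z (lt_of_lt_of_le hθs hz.1)).differentiableAt.continuousAt.continuousWithinAt)
        (fun z hz => by
          rw [interior_Icc] at hz
          exact (hHD z (lt_trans hθs hz.1)).differentiableAt.differentiableWithinAt)
        (fun z hz => by
          rw [interior_Icc] at hz
          rw [(hHD z (lt_trans hθs hz.1)).deriv]
          have := hDmono (θ s) z hθs hz.1.le
          linarith [hDsAs])
      exact hmon (Set.left_mem_Icc.2 hcase) (Set.right_mem_Icc.2 hcase) hcase
    · have hmon := antitoneOn_of_deriv_nonpos (convex_Icc (θ t) (θ s))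
        (f := fun y => (∫ u in (0:ℝ)..s, psiN (Real.log (Real.exp y * (1 - F u) + F u))) - As * y)
        (fun z hz => (hHD z (lt_of_lt_of_le hθt hz.1)).differentiableAt.continuousAt.continuousWithinAt)
        (fun z hz => by
          rw [interior_Icc] at hz
          exact (hHD z (lt_trans hθt hz.1)).differentiableAt.differentiableWithinAt)
        (fun z hz => by
          rw [interior_Icc] at hz
          rw [(hHD z (lt_trans hθt hz.1)).deriv]
          have := hDmono z (θ s) (lt_trans hθt hz.1) hz.2.le
          linarith [hDsAs])
      exact hmon (Set.left_mem_Icc.2 hcase) (Set.right_mem_Icc.2 hcase) hcase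
  have hsplit : (∫ u in (0:ℝ)..t, psiN (Real.log (Real.exp (θ t) * (1 - F u) + F u)))
      = (∫ u in (0:ℝ)..s, psiN (Real.log (Real.exp (θ t) * (1 - F u) + F u)))
        + ∫ u in s..t, psiN (Real.log (Real.exp (θ t) * (1 - F u) + F u)) :=
    (intervalIntegral.integral_add_adjacent_intervals
      ((aux_contG hψ.continuous hFc hFrange (θ t)).intervalIntegrable _ _)
      ((aux_contG hψ.continuous hFc hFrange (θ t)).intervalIntegrable _ _)).symm
  have hlow : lam * (∫ u in s..t, (1 - F u)) * θ t ≤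
      ∫ u in s..t, psiN (Real.log (Real.exp (θ t) * (1 - F u) + F u)) := by
    have h2 : (∫ u in s..t, lam * (1 - F u) * θ t) =
        lam * (∫ u in s..t, (1 - F u)) * θ t := by
      have he : (fun u => lam * (1 - F u) * θ t) = fun u => (lam * θ t) * (1 - F u) := by
        funext u; ring
      rw [he, intervalIntegral.integral_const_mul]; ring
    rw [← h2]
    refine intervalIntegral.integral_mono_on hst
      ((by fun_prop : Continuous fun u => lam * (1 - F u) * θ t).intervalIntegrable _ _)
      ((aux_contG hψ.continuous hFc hFrange (θ t)).intervalIntegrable _ _) fun u _ => ?_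
    exact aux_G_lb hψ hmono' hd0 hlam hpsiN0 (by linarith [(hFrange u).2]) (hFrange u).1
      (by ring) hθt.le
  have htail : (∫ u in Set.Ioi s, (1 - F u)) - (∫ u in Set.Ioi t, (1 - F u)) ≤
      ∫ u in s..t, (1 - F u) := by
    have hun : Set.Ioc s t ∪ Set.Ioi t = Set.Ioi s := Set.Ioc_union_Ioi_eq_Ioi hst
    by_cases hint : IntegrableOn (fun u => 1 - F u) (Set.Ioi s) volume
    · have heq : (∫ u in Set.Ioi s, (1 - F u)) =
          (∫ u in Set.Ioc s t, (1 - F u)) + ∫ u in Set.Ioi t, (1 - F u) := by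
        rw [← hun]
        exact setIntegral_union (Set.Ioc_disjoint_Ioi le_rfl) measurableSet_Ioi
          (hint.mono_set (by rw [← hun]; exact Set.subset_union_left))
          (hint.mono_set (by rw [← hun]; exact Set.subset_union_right))
      rw [intervalIntegral.integral_of_le hst]
      linarith
    · have hzs : (∫ u in Set.Ioi s, (1 - F u)) = 0 := integral_undef hint
      have hint_t : ¬ IntegrableOn (fun u => 1 - F u) (Set.Ioi t) volume := by
        intro h
        apply hint
        rw [← hun]
        exact (integrableOn_union).2
          ⟨(by fun_prop : Continuous fun u => 1 - F u).integrableOn_Ioc, h⟩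
      have hzt : (∫ u in Set.Ioi t, (1 - F u)) = 0 := integral_undef hint_t
      rw [hzs, hzt]
      simpa using intervalIntegral.integral_nonneg hst fun u _ => by linarith [(hFrange u).2]
  have e1 : At - As ≤ lam * ∫ u in s..t, (1 - F u) := by
    rw [hAs, hAt]
    have := mul_le_mul_of_nonneg_left htail hlam.le
    ring_nf
    ring_nf at this
    linarith
  have e2 : θ t * At - θ t * As ≤ lam * (∫ u in s..t, (1 - F u)) * θ t := by
    nlinarith [mul_le_mul_of_nonneg_left e1 hθt.le]
  rw [hI s, hI t, ← hAs, ← hAt]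
  linarith [hsplit, hlow, e2, claim2, hAs, hAt]
end

section
/- Suppose \psi_N is increasing, strictly convex, steep with \psi_N'(0)=\lambda>0, and satisfies \theta (d/d\theta)\log\psi_N(\theta) \to \infty as \theta \to \infty. Let \tilde{\theta}_t = (\psi_N')^{-1}((1-\lambda EV)/t) and \tilde{I}_t = \tilde{\theta}_t(1-\lambda EV) - \psi_N(\tilde{\theta}_t)t. Then \tilde{I}_t \to \infty as t \to 0^+. -/
open Filter Set

/-- Under the technical condition `θ·(d/dθ)log ψ_N(θ) → ∞`, the rate
`Ĩ_t = θ̃_t(1-λEV) - ψ_N(θ̃_t)t` tends to `∞` as `t → 0⁺`. -/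
theorem Itilde_tendsto_atTop
    (psiN : ℝ → ℝ) (lam EV ε0 : ℝ)
    (hC2 : ContDiff ℝ 2 psiN)
    (hmono : StrictMono psiN)
    (hconv : StrictConvexOn ℝ Set.univ psiN)
    (hsteep : Tendsto (deriv psiN) atTop atTop)
    (hpsiN0 : psiN 0 = 0)
    (hpsiNpos : ∀ θ > (0:ℝ), 0 < psiN θ)
    (hd0 : deriv psiN 0 = lam)
    (hlamEV : 0 < lam * EV) (hrho : lam * EV < 1)
    (htech : Tendsto (fun θ => θ * deriv psiN θ / psiN θ) atTop atTop)
    (hε0 : 0 < ε0)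
    (tθ : ℝ → ℝ)
    (htθ : ∀ t ∈ Ioo (0:ℝ) ε0, 0 < tθ t ∧ deriv psiN (tθ t) * t = 1 - lam * EV) :
    Tendsto (fun t => tθ t * (1 - lam * EV) - psiN (tθ t) * t)
      (nhdsWithin 0 (Set.Ioi 0)) atTop := by
  set r := lam * EV with hr
  have hr1 : 0 < 1 - r := by linarith
  have hdiff : Differentiable ℝ psiN := hC2.differentiable (by norm_num)
  have hdmono : StrictMono (deriv psiN) := by
    have := hconv.strictMonoOn_deriv (fun x _ => hdiff x)
    intro a b hab
    exact this (mem_univ a) (mem_univ b) hab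
  -- derivative positive at positive points
  have hlam : 0 ≤ lam := by
    have hs := hconv.slope_lt_deriv (mem_univ (-1:ℝ)) (mem_univ (0:ℝ)) (by norm_num) (hdiff 0)
    have hm : psiN (-1) < psiN 0 := hmono (by norm_num)
    rw [hd0] at hs
    simp only [slope_def_field, div_eq_mul_inv] at hs
    nlinarith
  have hdpos : ∀ θ > (0:ℝ), 0 < deriv psiN θ := by
    intro θ hθ
    have := hdmono hθ
    rw [hd0] at this
    linarith
  -- tθ tends to atTop
  have htθ_top : Tendsto tθ (nhdsWithin 0 (Set.Ioi 0)) atTop := by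
    rw [tendsto_atTop]
    intro M
    set c := deriv psiN (max M 0) with hc
    have hc0 : 0 ≤ c := by
      have : deriv psiN 0 ≤ c := (hdmono.monotone) (le_max_right M 0)
      rw [hd0] at this; linarith
    set δ := min ε0 ((1 - r) / (c + 1)) with hδ
    have hδpos : 0 < δ := lt_min hε0 (div_pos hr1 (by linarith))
    filter_upwards [Ioo_mem_nhdsGT_of_mem (by constructor <;> simp [hδpos.le, hδpos] : (0:ℝ) ∈ Ico 0 δ)] with t ht
    have ht0 : 0 < t := ht.1
    have htε : t < ε0 := lt_of_lt_of_le ht.2 (min_le_left _ _)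
    obtain ⟨hpos, heq⟩ := htθ t ⟨ht0, htε⟩
    have htδ : t < (1 - r) / (c + 1) := lt_of_lt_of_le ht.2 (min_le_right _ _)
    have hd_big : c + 1 < deriv psiN (tθ t) := by
      have h1 : deriv psiN (tθ t) = (1 - r) / t := by
        field_simp at heq ⊢
        linarith [heq]
      rw [h1]
      rw [lt_div_iff₀ ht0]
      calc (c + 1) * t < (c + 1) * ((1 - r) / (c + 1)) := by
            apply mul_lt_mul_of_pos_left htδ (by linarith)
        _ = 1 - r := by field_simp
    by_contra h
    push_neg at h
    have : deriv psiN (tθ t) ≤ c := by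
      rcases lt_or_eq_of_le (le_max_of_le_left h.le : tθ t ≤ max M 0) with h' | h'
      · exact (hdmono h').le
      · rw [h']
    linarith
  -- the limiting function in θ
  have hf : Tendsto (fun θ => θ * (1 - r) - psiN θ * ((1 - r) / deriv psiN θ))
      atTop atTop := by
    apply tendsto_atTop_mono' atTop
      (f₁ := fun θ => (1 - r) / 2 * θ)
    · filter_upwards [htech.eventually_ge_atTop 2, eventually_gt_atTop (0:ℝ)] with θ h2 hθ
      have hψ := hpsiNpos θ hθ
      have hψ' := hdpos θ hθ
      have key : psiN θ / deriv psiN θ ≤ θ / 2 := by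
        rw [le_div_iff₀ hψ] at h2
        rw [div_le_div_iff₀ hψ' two_pos]
        nlinarith
      have : psiN θ * ((1 - r) / deriv psiN θ) ≤ (1 - r) * (θ / 2) := by
        rw [mul_div_assoc'] at *
        rw [mul_comm (psiN θ), mul_div_assoc]
        exact mul_le_mul_of_nonneg_left key hr1.le
      nlinarith
    · exact (tendsto_const_mul_atTop_of_pos (by linarith)).mpr tendsto_id
  -- conclude
  have hcomp := hf.comp htθ_top
  apply hcomp.congr'
  filter_upwards [Ioo_mem_nhdsGT_of_mem (by constructor <;> simp [hε0.le, hε0] : (0:ℝ) ∈ Ico 0 ε0)] with t ht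
  obtain ⟨hpos, heq⟩ := htθ t ⟨ht.1, ht.2⟩
  have hψ' := hdpos _ hpos
  have ht' : t = (1 - r) / deriv psiN (tθ t) := by
    field_simp
    linarith [heq]
  simp only [Function.comp]
  rw [← ht']
end

section
/- For the M/G/s loss system with arrival rate \lambda s and mean service time EV such that \rho := \lambda EV < 1, the Erlang loss probability p_s = (\rho s)^s/s! / \sum_{k=0}^s (\rho s)^k/k! satisfies (1/s)\log p_s \to \log\rho + 1 - \rho as s \to \infty. Equivalently, the loss probability decays exponentially in s with rate -(\log\rho + 1 - \rho) > 0. -/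
set_option maxHeartbeats 1000000

open Filter Real

lemma erlang_tail_bound (ρ : ℝ) (hρ0 : 0 < ρ) (hρ1 : ρ < 1) (s : ℕ) :
    Real.exp (ρ * s) - (∑ k ∈ Finset.range (s + 1), (ρ * s) ^ k / (Nat.factorial k : ℝ))
      ≤ (ρ * Real.exp 1) ^ (s + 1) / (1 - ρ) := by
  set x := ρ * (s : ℝ) with hxdef
  have hx : 0 ≤ x := by positivity
  have hsum : Summable (fun n : ℕ => x ^ n / (Nat.factorial n : ℝ)) :=
    Real.summable_pow_div_factorial x
  have hexp : Real.exp x = ∑' n : ℕ, x ^ n / (Nat.factorial n : ℝ) := by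
    rw [Real.exp_eq_exp_ℝ, NormedSpace.exp_eq_tsum_div]
  have hsplit : (∑ k ∈ Finset.range (s + 1), x ^ k / (Nat.factorial k : ℝ))
      + ∑' k : ℕ, x ^ (k + (s+1)) / (Nat.factorial (k + (s+1)) : ℝ) = Real.exp x := by
    rw [hexp]; exact hsum.sum_add_tsum_nat_add (s+1)
  have hterm : ∀ k : ℕ, x ^ (k + (s+1)) / (Nat.factorial (k + (s+1)) : ℝ)
      ≤ (x ^ (s+1) / (Nat.factorial (s+1) : ℝ)) * ρ ^ k := by
    intro k
    induction k with
    | zero => simp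
    | succ k ih =>
      have hfac : (Nat.factorial (k + 1 + (s+1)) : ℝ)
          = (Nat.factorial (k + (s+1)) : ℝ) * ((k : ℝ) + (s:ℝ) + 2) := by
        have : k + 1 + (s+1) = (k + (s+1)) + 1 := by ring
        rw [this, Nat.factorial_succ]
        push_cast
        ring
      have heq : x ^ (k + 1 + (s+1)) / (Nat.factorial (k + 1 + (s+1)) : ℝ)
          = (x ^ (k + (s+1)) / (Nat.factorial (k + (s+1)) : ℝ)) * (x / ((k:ℝ) + (s:ℝ) + 2)) := by
        rw [hfac]
        have : k + 1 + (s+1) = (k + (s+1)) + 1 := by ring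
        rw [this, pow_succ]
        have h1 : (Nat.factorial (k + (s+1)) : ℝ) ≠ 0 := by positivity
        have h2 : ((k:ℝ) + (s:ℝ) + 2) ≠ 0 := by positivity
        field_simp
      have hratio : x / ((k:ℝ) + (s:ℝ) + 2) ≤ ρ := by
        rw [div_le_iff₀ (by positivity)]
        have : (s : ℝ) ≤ (k:ℝ) + (s:ℝ) + 2 := by linarith [Nat.cast_nonneg (α := ℝ) k]
        calc x = ρ * s := hxdef
          _ ≤ ρ * ((k:ℝ) + (s:ℝ) + 2) := by nlinarith
      rw [heq, pow_succ]
      have hnn : 0 ≤ x ^ (k + (s+1)) / (Nat.factorial (k + (s+1)) : ℝ) := by positivity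
      calc x ^ (k + (s+1)) / (Nat.factorial (k + (s+1)) : ℝ) * (x / ((k:ℝ) + (s:ℝ) + 2))
          ≤ (x ^ (s+1) / (Nat.factorial (s+1) : ℝ) * ρ ^ k) * ρ := by
            apply mul_le_mul ih hratio (by positivity)
            positivity
        _ = x ^ (s+1) / (Nat.factorial (s+1) : ℝ) * (ρ ^ k * ρ) := by ring
  have htails : Summable (fun k : ℕ => x ^ (k + (s+1)) / (Nat.factorial (k + (s+1)) : ℝ)) :=
    (summable_nat_add_iff (s+1)).2 hsum
  have hgeo : Summable (fun k : ℕ => (x ^ (s+1) / (Nat.factorial (s+1) : ℝ)) * ρ ^ k) :=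
    (summable_geometric_of_lt_one hρ0.le hρ1).mul_left _
  have htail_le : ∑' k : ℕ, x ^ (k + (s+1)) / (Nat.factorial (k + (s+1)) : ℝ)
      ≤ (x ^ (s+1) / (Nat.factorial (s+1) : ℝ)) * (1 - ρ)⁻¹ := by
    calc ∑' k : ℕ, x ^ (k + (s+1)) / (Nat.factorial (k + (s+1)) : ℝ)
        ≤ ∑' k : ℕ, (x ^ (s+1) / (Nat.factorial (s+1) : ℝ)) * ρ ^ k :=
          htails.tsum_le_tsum hterm hgeo
      _ = (x ^ (s+1) / (Nat.factorial (s+1) : ℝ)) * (1 - ρ)⁻¹ := by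
          rw [tsum_mul_left, tsum_geometric_of_lt_one hρ0.le hρ1]
  have hhead : x ^ (s+1) / (Nat.factorial (s+1) : ℝ) ≤ (ρ * Real.exp 1) ^ (s+1) := by
    have h1 : x ^ (s+1) ≤ (ρ * ((s:ℝ)+1)) ^ (s+1) := by
      apply pow_le_pow_left₀ hx
      have : (s:ℝ) ≤ (s:ℝ) + 1 := by linarith
      nlinarith
    have h2 : ((s:ℝ)+1) ^ (s+1) / (Nat.factorial (s+1) : ℝ) ≤ Real.exp ((s:ℕ)+1 : ℕ) := by
      have := Real.pow_div_factorial_le_exp (x := ((s:ℝ)+1)) (by positivity) (s+1)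
      push_cast at this ⊢
      exact this
    have h3 : Real.exp (((s:ℕ)+1 : ℕ) : ℝ) = (Real.exp 1) ^ (s+1) := by
      rw [← Real.exp_nat_mul]
      push_cast
      ring_nf
    calc x ^ (s+1) / (Nat.factorial (s+1) : ℝ)
        ≤ (ρ * ((s:ℝ)+1)) ^ (s+1) / (Nat.factorial (s+1) : ℝ) := by
          apply div_le_div_of_nonneg_right h1 (by positivity) |>.trans_eq rfl
      _ = ρ ^ (s+1) * (((s:ℝ)+1) ^ (s+1) / (Nat.factorial (s+1) : ℝ)) := by
          rw [mul_pow]; ring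
      _ ≤ ρ ^ (s+1) * (Real.exp 1) ^ (s+1) := by
          apply mul_le_mul_of_nonneg_left _ (by positivity)
          rw [← h3]; exact h2
      _ = (ρ * Real.exp 1) ^ (s+1) := by rw [mul_pow]
  have key : Real.exp x - (∑ k ∈ Finset.range (s + 1), x ^ k / (Nat.factorial k : ℝ))
      = ∑' k : ℕ, x ^ (k + (s+1)) / (Nat.factorial (k + (s+1)) : ℝ) := by
    linarith [hsplit]
  rw [hxdef] at key ⊢
  rw [key]
  rw [div_eq_mul_inv]
  calc (∑' k : ℕ, (ρ * s) ^ (k + (s+1)) / (Nat.factorial (k + (s+1)) : ℝ))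
      ≤ ((ρ*s) ^ (s+1) / (Nat.factorial (s+1) : ℝ)) * (1 - ρ)⁻¹ := htail_le
    _ ≤ (ρ * Real.exp 1) ^ (s+1) * (1 - ρ)⁻¹ := by
        apply mul_le_mul_of_nonneg_right hhead
        rw [inv_nonneg]; linarith

lemma erlang_log_sum (ρ : ℝ) (hρ0 : 0 < ρ) (hρ1 : ρ < 1) :
    Tendsto (fun s : ℕ =>
      Real.log (∑ k ∈ Finset.range (s + 1), (ρ * s) ^ k / (Nat.factorial k : ℝ)) / s)
      atTop (nhds ρ) := by
  set S : ℕ → ℝ := fun s => ∑ k ∈ Finset.range (s + 1), (ρ * s) ^ k / (Nat.factorial k : ℝ)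
    with hSdef
  have hS1 : ∀ s, (1:ℝ) ≤ S s := by
    intro s
    have h0 : (ρ * s) ^ 0 / (Nat.factorial 0 : ℝ) = 1 := by simp
    calc (1:ℝ) = (ρ * s) ^ 0 / (Nat.factorial 0 : ℝ) := h0.symm
      _ ≤ S s := Finset.single_le_sum (f := fun k => (ρ*s)^k / (Nat.factorial k : ℝ))
          (fun i _ => by positivity) (Finset.mem_range.2 (Nat.succ_pos s))
  have hSpos : ∀ s, 0 < S s := fun s => lt_of_lt_of_le one_pos (hS1 s)
  have hSub : ∀ s : ℕ, S s ≤ Real.exp (ρ * s) := fun s =>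
    Real.sum_le_exp_of_nonneg (by positivity) (s+1)
  -- the decay rate
  set c : ℝ := ρ * Real.exp (1 - ρ) with hcdef
  have hcpos : 0 < c := by positivity
  have hc1 : c < 1 := by
    have hlog : Real.log ρ < ρ - 1 := Real.log_lt_sub_one_of_pos hρ0 (ne_of_lt hρ1)
    have : ρ < Real.exp (ρ - 1) := by
      calc ρ = Real.exp (Real.log ρ) := (Real.exp_log hρ0).symm
        _ < Real.exp (ρ - 1) := Real.exp_lt_exp.2 hlog
    calc c = ρ * Real.exp (1 - ρ) := hcdef
      _ < Real.exp (ρ - 1) * Real.exp (1 - ρ) := by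
          apply mul_lt_mul_of_pos_right this (Real.exp_pos _)
      _ = 1 := by rw [← Real.exp_add]; norm_num
  set δ : ℕ → ℝ := fun s => (ρ * Real.exp 1 / (1 - ρ)) * c ^ s with hδdef
  have hδpos : ∀ s, 0 < δ s := by
    intro s
    have h1ρ : 0 < 1 - ρ := by linarith
    positivity
  have hδ0 : Tendsto δ atTop (nhds 0) := by
    have := (tendsto_pow_atTop_nhds_zero_of_lt_one hcpos.le hc1).const_mul
      (ρ * Real.exp 1 / (1 - ρ))
    simpa using this
  -- tail relative bound : exp(ρs) - S s ≤ δ s * exp (ρ s)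
  have hrel : ∀ s : ℕ, Real.exp (ρ * s) - S s ≤ δ s * Real.exp (ρ * s) := by
    intro s
    have h1ρ : 0 < 1 - ρ := by linarith
    have := erlang_tail_bound ρ hρ0 hρ1 s
    have heq : (ρ * Real.exp 1) ^ (s + 1) / (1 - ρ) = δ s * Real.exp (ρ * s) := by
      have e1 : (Real.exp (1 - ρ)) ^ s = Real.exp ((s:ℕ) * (1 - ρ)) := (Real.exp_nat_mul _ s).symm
      have e2 : (ρ * Real.exp 1) ^ (s+1) = ρ ^ (s+1) * Real.exp (((s+1:ℕ)) * 1) := by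
        rw [mul_pow, Real.exp_nat_mul]
      have e3 : Real.exp ((((s+1:ℕ)):ℝ) * 1)
          = Real.exp 1 * Real.exp ((s:ℝ) * (1-ρ)) * Real.exp (ρ * (s:ℝ)) := by
        rw [← Real.exp_add, ← Real.exp_add]; congr 1; push_cast; ring
      rw [hδdef]
      simp only [hcdef]
      rw [mul_pow ρ (Real.exp (1-ρ)), e1, e2, e3, pow_succ ρ s]
      field_simp
    linarith [heq ▸ this]
  -- lower bound on log S
  have hLB : ∀ᶠ s : ℕ in atTop, ρ + Real.log (1 - δ s) * ((s:ℝ))⁻¹ ≤ Real.log (S s) / s := by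
    have hev : ∀ᶠ s : ℕ in atTop, δ s < 1 := by
      filter_upwards [hδ0.eventually (gt_mem_nhds one_pos)] with s hs using hs
    filter_upwards [hev, eventually_ge_atTop 1] with s hδs hs1
    have hsp : (0:ℝ) < s := by exact_mod_cast hs1
    have h1δ : 0 < 1 - δ s := by linarith
    have hlow : (1 - δ s) * Real.exp (ρ * s) ≤ S s := by nlinarith [hrel s, Real.exp_pos (ρ * s)]
    have hlog : ρ * s + Real.log (1 - δ s) ≤ Real.log (S s) := by
      have := Real.log_le_log (by positivity) hlow
      rwa [Real.log_mul (ne_of_gt h1δ) (Real.exp_ne_zero _), Real.log_exp, add_comm] at this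
    rw [le_div_iff₀ hsp]
    have hne : (s:ℝ) ≠ 0 := ne_of_gt hsp
    have : (ρ + Real.log (1 - δ s) * ((s:ℝ))⁻¹) * s = ρ * s + Real.log (1 - δ s) := by
      field_simp
    linarith [this]
  have hUB : ∀ᶠ s : ℕ in atTop, Real.log (S s) / s ≤ ρ := by
    filter_upwards [eventually_ge_atTop 1] with s hs1
    have hsp : (0:ℝ) < s := by exact_mod_cast hs1
    have : Real.log (S s) ≤ ρ * s := by
      calc Real.log (S s) ≤ Real.log (Real.exp (ρ * s)) :=
          Real.log_le_log (hSpos s) (hSub s)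
        _ = ρ * s := Real.log_exp _
    rw [div_le_iff₀ hsp]
    linarith
  -- lower sequence tends to ρ
  have hlow_tendsto : Tendsto (fun s : ℕ => ρ + Real.log (1 - δ s) * ((s:ℝ))⁻¹) atTop (nhds ρ) := by
    have h1 : Tendsto (fun s : ℕ => Real.log (1 - δ s)) atTop (nhds 0) := by
      have : Tendsto (fun s : ℕ => 1 - δ s) atTop (nhds 1) := by
        simpa using tendsto_const_nhds.sub hδ0
      have hcont : ContinuousAt Real.log 1 := Real.continuousAt_log one_ne_zero
      simpa [Function.comp_def] using hcont.tendsto.comp this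
    have h2 : Tendsto (fun s : ℕ => ((s:ℝ))⁻¹) atTop (nhds 0) :=
      tendsto_inv_atTop_zero.comp tendsto_natCast_atTop_atTop
    simpa using tendsto_const_nhds.add (h1.mul h2)
  exact tendsto_of_tendsto_of_tendsto_of_le_of_le' hlow_tendsto tendsto_const_nhds hLB hUB

/-- The Erlang loss probability `p_s = ((ρs)^s/s!)/∑_{k=0}^s (ρs)^k/k!` with
`0 < ρ < 1` satisfies `(1/s) log p_s → log ρ + 1 - ρ` as `s → ∞`. -/
theorem erlang_loss_logarithmic_asymptotics
    (ρ : ℝ) (hρ0 : 0 < ρ) (hρ1 : ρ < 1) :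
    Tendsto (fun s : ℕ =>
      Real.log (((ρ * s) ^ s / (Nat.factorial s : ℝ)) /
        (∑ k ∈ Finset.range (s + 1), (ρ * s) ^ k / (Nat.factorial k : ℝ))) / (s : ℝ))
      atTop (nhds (Real.log ρ + 1 - ρ)) := by
  set S : ℕ → ℝ := fun s => ∑ k ∈ Finset.range (s + 1), (ρ * s) ^ k / (Nat.factorial k : ℝ)
    with hSdef
  have hSpos : ∀ s, 0 < S s := by
    intro s
    have h0 : (ρ * s) ^ 0 / (Nat.factorial 0 : ℝ) = 1 := by simp
    have : (1:ℝ) ≤ S s := by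
      calc (1:ℝ) = (ρ * s) ^ 0 / (Nat.factorial 0 : ℝ) := h0.symm
        _ ≤ S s := Finset.single_le_sum (f := fun k => (ρ*s)^k / (Nat.factorial k : ℝ))
            (fun i _ => by positivity) (Finset.mem_range.2 (Nat.succ_pos s))
    linarith
  -- convergence components
  have hπ : Real.sqrt Real.pi ≠ 0 := ne_of_gt (Real.sqrt_pos.2 Real.pi_pos)
  have hstir : Tendsto (fun s : ℕ => Real.log (Stirling.stirlingSeq s) / s) atTop (nhds 0) := by
    have h1 : Tendsto (fun s : ℕ => Real.log (Stirling.stirlingSeq s)) atTop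
        (nhds (Real.log (Real.sqrt Real.pi))) :=
      ((Real.continuousAt_log hπ).tendsto.comp Stirling.tendsto_stirlingSeq_sqrt_pi)
    exact h1.div_atTop tendsto_natCast_atTop_atTop
  have hlog2s : Tendsto (fun s : ℕ => (1/2 * Real.log (2 * s)) / s) atTop (nhds 0) := by
    have h1 : Tendsto (fun s : ℕ => Real.log s / s) atTop (nhds 0) :=
      (Real.isLittleO_log_id_atTop.tendsto_div_nhds_zero).comp tendsto_natCast_atTop_atTop
    have h2 : Tendsto (fun s : ℕ => Real.log 2 / s) atTop (nhds 0) :=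
      tendsto_const_nhds.div_atTop tendsto_natCast_atTop_atTop
    have h3 : Tendsto (fun s : ℕ => 1/2 * (Real.log 2 / s + Real.log s / s)) atTop (nhds 0) := by
      have := (h2.add h1).const_mul (1/2 : ℝ)
      simpa using this
    refine h3.congr' ?_
    filter_upwards [eventually_ge_atTop 1] with s hs1
    have hsp : (0:ℝ) < s := by exact_mod_cast hs1
    rw [Real.log_mul two_ne_zero (ne_of_gt hsp)]
    ring
  have hsum := erlang_log_sum ρ hρ0 hρ1
  -- the limit of the composite
  have hG : Tendsto (fun s : ℕ => Real.log ρ + 1 - Real.log (Stirling.stirlingSeq s) / s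
      - (1/2 * Real.log (2 * s)) / s - Real.log (S s) / s) atTop
      (nhds (Real.log ρ + 1 - ρ)) := by
    have := ((tendsto_const_nhds (x := Real.log ρ + 1) (f := atTop (α := ℕ))).sub hstir).sub
      hlog2s |>.sub hsum
    simpa using this
  refine hG.congr' ?_
  filter_upwards [eventually_ge_atTop 1] with s hs1
  have hsp : (0:ℝ) < s := by exact_mod_cast hs1
  have hsne : (s:ℝ) ≠ 0 := ne_of_gt hsp
  have hρs : (0:ℝ) < ρ * s := by positivity
  have hfacpos : (0:ℝ) < (Nat.factorial s : ℝ) := by positivity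
  have hNpos : (0:ℝ) < (ρ * s) ^ s / (Nat.factorial s : ℝ) := by positivity
  -- expand the log
  have hexpand : Real.log (((ρ * s) ^ s / (Nat.factorial s : ℝ)) / S s)
      = (s : ℝ) * (Real.log ρ + Real.log s) - Real.log (Nat.factorial s : ℝ)
        - Real.log (S s) := by
    rw [Real.log_div (ne_of_gt hNpos) (ne_of_gt (hSpos s)),
        Real.log_div (by positivity) (ne_of_gt hfacpos), Real.log_pow,
        Real.log_mul (ne_of_gt hρ0) hsne]
  have hstirformula : Real.log (Nat.factorial s : ℝ)
      = Real.log (Stirling.stirlingSeq s) + 1/2 * Real.log (2 * s)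
        + (s:ℝ) * (Real.log s - 1) := by
    have := Stirling.log_stirlingSeq_formula s
    have hle : Real.log ((s:ℝ) / Real.exp 1) = Real.log s - 1 := by
      rw [Real.log_div hsne (Real.exp_ne_zero 1), Real.log_exp]
    rw [hle] at this
    linarith
  rw [hexpand, hstirformula]
  field_simp
  ring
end
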